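/- arXiv:1410.2924 — 8 statements merged into one kernel-verified Lean document; each statement's English description precedes it below -/
import Mathlib

section
/- Fix a femtocell user k and another user j ≠ k, and fix the transmit powers of all users other than k and j. Suppose p_k ≤ p_k' and p_j ≤ p_j' are powers in the feasible intervals such that for every power vector q in the rectangle [p_k, p_k'] × [p_j, p_j'] (with the other coordinates fixed) one has γ_k(q)·q_k ≥ p_a. Then the payoff u_k has increasing differences in (p_k, p_j): u_k(p_k', p_j') − u_k(p_k, p_j') ≥ u_k(p_k', p_j) − u_k(p_k, p_j). (This is Theorem 1: given the MBS prices, the follower subgame is a supermodular game whenever γ_k ≥ p_a/p_k.) -/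
/-!
Only the rate term of `u_k` depends on `p_j`, and only through the interference level
`A = D + h_{j,k} p_j` seen by user `k`, where `D` collects the noise and the interference of
all other users; the price term is linear in `p_k` and cancels from both
differences. Writing `E(A, x) = log (1 + h x / A) / (x + p_a)` with `h = h_{k,k}`, one has
`∂E/∂A = -(h / A) · x / ((x + p_a) (A + h x))`, and `x ↦ x / ((x + p_a) (A + h x))` is
decreasing wherever `h x² ≥ p_a A`, i.e. wherever `γ_k x ≥ p_a`. So `E(A, p_k') - E(A, p_k)`
increases with `A`, and `A` increases with `p_j`.
-/

open Real Finset

/-- SINR of FU `k`: `γ_k(p) = h_{k,k} p_k / (N_k + h_{0,k} p_0 + Σ_{j≠k} h_{j,k} p_j)`. -/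
noncomputable def sinr {K : ℕ} (hff : Fin K → Fin K → ℝ) (h0f N : Fin K → ℝ)
    (p0 : ℝ) (k : Fin K) (p : Fin K → ℝ) : ℝ :=
  hff k k * p k / (N k + h0f k * p0 + ∑ j ∈ Finset.univ.erase k, hff j k * p j)

/-- Net payoff of FU `k`: `u_k(p) = W·log(1 + γ_k(p))/(p_k + p_a) − λ_k h_{k,0} p_k`. -/
noncomputable def payoff {K : ℕ} (W pa p0 : ℝ) (hff : Fin K → Fin K → ℝ)
    (h0f hf0 N lam : Fin K → ℝ) (k : Fin K) (p : Fin K → ℝ) : ℝ :=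
  W * Real.log (1 + sinr hff h0f N p0 k p) / (p k + pa) - lam k * hf0 k * p k

noncomputable def powerEfficiency (h pa A x : ℝ) : ℝ := log (1 + h * x / A) / (x + pa)

noncomputable def interferenceSensitivity (h pa A x : ℝ) : ℝ := x / ((x + pa) * (A + h * x))

lemma hasDerivAt_powerEfficiency {h pa A x : ℝ} (hA : 0 < A) (hx : 0 ≤ h * x)
    (hxpa : 0 < x + pa) :
    HasDerivAt (fun A => powerEfficiency h pa A x)
      (-(h / A) * interferenceSensitivity h pa A x) A := by
  have hinner : HasDerivAt (fun A => 1 + h * x / A) (-(h * x) / A ^ 2) A := by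
    simpa [div_eq_mul_inv] using ((hasDerivAt_inv hA.ne').const_mul (h * x)).const_add 1
  have hpos : 0 < 1 + h * x / A := by positivity
  have hAx : 0 < A + h * x := by positivity
  refine ((hinner.log hpos.ne').div_const (x + pa)).congr_deriv ?_
  rw [interferenceSensitivity]
  field_simp

-- After cross-multiplying, the two sides differ by `(x' - x) (h x x' - pa A)`.
lemma interferenceSensitivity_le {h pa A x x' : ℝ} (hh : 0 ≤ h) (hpa : 0 < pa) (hA : 0 < A)
    (hx : 0 ≤ x) (hxx' : x ≤ x') (hcond : pa * A ≤ h * x * x') :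
    interferenceSensitivity h pa A x' ≤ interferenceSensitivity h pa A x := by
  have hx' : 0 ≤ x' := hx.trans hxx'
  rw [interferenceSensitivity, interferenceSensitivity,
    div_le_div_iff₀ (by positivity) (by positivity)]
  nlinarith [mul_nonneg (sub_nonneg.2 hxx') (sub_nonneg.2 hcond)]

lemma monotoneOn_powerEfficiency_sub {h pa A₀ A₁ x x' : ℝ} (hh : 0 ≤ h) (hpa : 0 < pa)
    (hA₀ : 0 < A₀) (hx : 0 ≤ x) (hxx' : x ≤ x') (hcond : pa * A₁ ≤ h * x * x') :
    MonotoneOn (fun A => powerEfficiency h pa A x' - powerEfficiency h pa A x)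
      (Set.Icc A₀ A₁) := by
  have hx' : 0 ≤ x' := hx.trans hxx'
  have hderiv : ∀ A ∈ Set.Icc A₀ A₁, HasDerivAt
      (fun A => powerEfficiency h pa A x' - powerEfficiency h pa A x)
      (h / A * (interferenceSensitivity h pa A x - interferenceSensitivity h pa A x')) A := by
    intro A hA
    have hApos : 0 < A := hA₀.trans_le hA.1
    have hx'pa : 0 < x' + pa := by positivity
    have hxpa : 0 < x + pa := by positivity
    refine ((hasDerivAt_powerEfficiency hApos (mul_nonneg hh hx') hx'pa).sub
      (hasDerivAt_powerEfficiency hApos (mul_nonneg hh hx) hxpa)).congr_deriv ?_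
    ring
  refine monotoneOn_of_hasDerivWithinAt_nonneg (convex_Icc A₀ A₁)
    (fun A hA => (hderiv A hA).continuousAt.continuousWithinAt)
    (fun A hA => (hderiv A (interior_subset hA)).hasDerivWithinAt) fun A hA => ?_
  rw [interior_Icc] at hA
  have hApos : 0 < A := hA₀.trans hA.1
  have hcondA : pa * A ≤ h * x * x' := (mul_le_mul_of_nonneg_left hA.2.le hpa.le).trans hcond
  exact mul_nonneg (by positivity)
    (sub_nonneg.2 (interferenceSensitivity_le hh hpa hApos hx hxx' hcondA))

noncomputable def backgroundInterference {K : ℕ} (hff : Fin K → Fin K → ℝ) (h0f N : Fin K → ℝ)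
    (p0 : ℝ) (k j : Fin K) (p : Fin K → ℝ) : ℝ :=
  N k + h0f k * p0 + ∑ i ∈ (univ.erase k).erase j, hff i k * p i

section TwoUsers

variable {K : ℕ} (hff : Fin K → Fin K → ℝ) (h0f N : Fin K → ℝ) (p0 : ℝ) {k j : Fin K}
  (p : Fin K → ℝ)

lemma sinr_update_update (hjk : j ≠ k) (x y : ℝ) :
    sinr hff h0f N p0 k (Function.update (Function.update p k x) j y) =
      hff k k * x / (backgroundInterference hff h0f N p0 k j p + hff j k * y) := by
  have hj : j ∈ univ.erase k := mem_erase.2 ⟨hjk, mem_univ j⟩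
  have hrest : ∀ i ∈ (univ.erase k).erase j,
      hff i k * Function.update (Function.update p k x) j y i = hff i k * p i := by
    intro i hi
    obtain ⟨hij, hik⟩ := mem_erase.1 hi
    rw [Function.update_of_ne hij, Function.update_of_ne (mem_erase.1 hik).1]
  rw [sinr, ← add_sum_erase _ _ hj, sum_congr rfl hrest, Function.update_self,
    Function.update_of_ne hjk.symm, Function.update_self, backgroundInterference]
  ring_nf

lemma payoff_update_update (W pa : ℝ) (hf0 lam : Fin K → ℝ) (hjk : j ≠ k) (x y : ℝ) :
    payoff W pa p0 hff h0f hf0 N lam k (Function.update (Function.update p k x) j y) =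
      W * powerEfficiency (hff k k) pa (backgroundInterference hff h0f N p0 k j p + hff j k * y) x
        - lam k * hf0 k * x := by
  rw [payoff, sinr_update_update hff h0f N p0 p hjk, Function.update_of_ne hjk.symm,
    Function.update_self, powerEfficiency, mul_div_assoc]

lemma backgroundInterference_pos (hp0 : 0 ≤ p0) (hhff : ∀ i j, 0 < hff i j)
    (hh0f : ∀ i, 0 < h0f i) (hN : ∀ i, 0 < N i) (hp : ∀ i, 0 ≤ p i) :
    0 < backgroundInterference hff h0f N p0 k j p := by
  have := sum_nonneg fun i (_ : i ∈ (univ.erase k).erase j) => mul_nonneg (hhff i k).le (hp i)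
  have := mul_nonneg (hh0f k).le hp0
  have := hN k
  rw [backgroundInterference]
  linarith

end TwoUsers

theorem payoff_increasing_differences_general {K : ℕ}
    (W pa p0 : ℝ) (hW : 0 < W) (hpa : 0 < pa) (hp0 : 0 ≤ p0)
    (hff : Fin K → Fin K → ℝ) (h0f hf0 N lam pmax : Fin K → ℝ)
    (hhff : ∀ i j, 0 < hff i j) (hh0f : ∀ i, 0 < h0f i)
    (hN : ∀ i, 0 < N i)
    (k j : Fin K) (hjk : j ≠ k)
    (p : Fin K → ℝ) (hp : ∀ i, 0 ≤ p i ∧ p i ≤ pmax i)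
    (pk pk' pj pj' : ℝ)
    (hpk0 : 0 ≤ pk) (hpkle : pk ≤ pk')
    (hpj0 : 0 ≤ pj) (hpjle : pj ≤ pj')
    (hcond : ∀ x ∈ Set.Icc pk pk', ∀ y ∈ Set.Icc pj pj',
      pa ≤ sinr hff h0f N p0 k (Function.update (Function.update p k x) j y) * x) :
    payoff W pa p0 hff h0f hf0 N lam k (Function.update (Function.update p k pk') j pj') -
      payoff W pa p0 hff h0f hf0 N lam k (Function.update (Function.update p k pk) j pj') ≥
    payoff W pa p0 hff h0f hf0 N lam k (Function.update (Function.update p k pk') j pj) -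
      payoff W pa p0 hff h0f hf0 N lam k (Function.update (Function.update p k pk) j pj) := by
  set D := backgroundInterference hff h0f N p0 k j p
  have hD : 0 < D := backgroundInterference_pos hff h0f N p0 p hp0 hhff hh0f hN fun i => (hp i).1
  have hA : D + hff j k * pj ≤ D + hff j k * pj' := by gcongr; exact (hhff j k).le
  have hA₀ : 0 < D + hff j k * pj := by have := hhff j k; positivity
  have hcond' : pa * (D + hff j k * pj') ≤ hff k k * pk * pk' := by
    have := hcond pk ⟨le_rfl, hpkle⟩ pj' ⟨hpjle, le_rfl⟩
    rw [sinr_update_update hff h0f N p0 p hjk, div_mul_eq_mul_div,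
      le_div_iff₀ (hA₀.trans_le hA)] at this
    nlinarith [mul_le_mul_of_nonneg_left hpkle (mul_nonneg (hhff k k).le hpk0)]
  have hmono := monotoneOn_powerEfficiency_sub (hhff k k).le hpa hA₀ hpk0 hpkle hcond'
    (Set.left_mem_Icc.2 hA) (Set.right_mem_Icc.2 hA) hA
  simp only [payoff_update_update hff h0f N p0 p W pa hf0 lam hjk]
  linarith [mul_le_mul_of_nonneg_left hmono hW.le]

/-- Theorem 1: given the MBS prices, the payoff `u_k` has increasing differences in
`(p_k, p_j)` on any rectangle where `γ_k · p_k ≥ p_a`. -/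
theorem payoff_increasing_differences {K : ℕ} (hK : 1 ≤ K)
    (W pa p0 : ℝ) (hW : 0 < W) (hpa : 0 < pa) (hp0 : 0 ≤ p0)
    (hff : Fin K → Fin K → ℝ) (h0f hf0 N lam pmax : Fin K → ℝ)
    (hhff : ∀ i j, 0 < hff i j) (hh0f : ∀ i, 0 < h0f i) (hhf0 : ∀ i, 0 < hf0 i)
    (hN : ∀ i, 0 < N i) (hlam : ∀ i, 0 ≤ lam i) (hpmax : ∀ i, 0 < pmax i)
    (k j : Fin K) (hjk : j ≠ k)
    (p : Fin K → ℝ) (hp : ∀ i, 0 ≤ p i ∧ p i ≤ pmax i)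
    (pk pk' pj pj' : ℝ)
    (hpk0 : 0 ≤ pk) (hpkmax : pk' ≤ pmax k) (hpkle : pk ≤ pk')
    (hpj0 : 0 ≤ pj) (hpjmax : pj' ≤ pmax j) (hpjle : pj ≤ pj')
    (hcond : ∀ x ∈ Set.Icc pk pk', ∀ y ∈ Set.Icc pj pj',
      pa ≤ sinr hff h0f N p0 k (Function.update (Function.update p k x) j y) * x) :
    payoff W pa p0 hff h0f hf0 N lam k (Function.update (Function.update p k pk') j pj') -
      payoff W pa p0 hff h0f hf0 N lam k (Function.update (Function.update p k pk) j pj') ≥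
    payoff W pa p0 hff h0f hf0 N lam k (Function.update (Function.update p k pk') j pj) -
      payoff W pa p0 hff h0f hf0 N lam k (Function.update (Function.update p k pk) j pj) :=
  payoff_increasing_differences_general W pa p0 hW hpa hp0 hff h0f hf0 N lam pmax hhff hh0f hN k j
    hjk p hp pk pk' pj pj' hpk0 hpkle hpj0 hpjle hcond
end

section
/- For every FU k and every fixed opponent power vector p_{-k} with nonnegative entries, the function p_k ↦ u_k(p_k, p_{-k}) is strictly quasiconcave on [0, p_k^max]: for all x, y ∈ [0, p_k^max] with x ≠ y and all t ∈ (0,1), u_k(t·x + (1−t)·y, p_{-k}) > min(u_k(x, p_{-k}), u_k(y, p_{-k})). (Part of Lemma 1.) -/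
/-!
With the other users' powers fixed, the payoff of user `k` at own power `q` is
`W * log (1 + a * q) / (q + pa) - c * q` with `a > 0` and `c ≥ 0`. Its derivative is
`ψ q / (q + pa) ^ 2`, where `ψ' q = -W a² (q + pa) / (1 + a q)² - 2 c (q + pa) < 0` on
`[0, ∞)`. So the derivative changes sign at most once, from positive to negative: the payoff
rises and then falls, and the value at an interior point of a segment beats the smaller endpoint
value.
-/

open Real Finset

/-- `f` is strictly increasing left of a point where `ψ ≥ 0` and strictly decreasing right of a
point where `ψ < 0`. -/
theorem min_lt_of_hasDerivAt_div_of_strictAntiOn {f ψ w : ℝ → ℝ} {s : Set ℝ}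
    (hs : s.OrdConnected) (hf : ∀ q ∈ s, HasDerivAt f (ψ q / w q) q)
    (hw : ∀ q ∈ s, 0 < w q) (hψ : StrictAntiOn ψ s)
    {x y z : ℝ} (hx : x ∈ s) (hy : y ∈ s) (hxz : x < z) (hzy : z < y) :
    min (f x) (f y) < f z := by
  have hz : z ∈ s := hs.out hx hy ⟨hxz.le, hzy.le⟩
  have hcont : ContinuousOn f s := fun q hq => (hf q hq).continuousAt.continuousWithinAt
  rcases le_or_gt 0 (ψ z) with hψz | hψz
  · have hmono : StrictMonoOn f (Set.Icc x z) := by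
      refine strictMonoOn_of_deriv_pos (convex_Icc x z) (hcont.mono (hs.out hx hz)) ?_
      intro q hq
      rw [interior_Icc] at hq
      have hqs : q ∈ s := hs.out hx hz (Set.Ioo_subset_Icc_self hq)
      rw [(hf q hqs).deriv]
      exact div_pos (hψz.trans_lt (hψ hqs hz hq.2)) (hw q hqs)
    exact (min_le_left _ _).trans_lt
      (hmono (Set.left_mem_Icc.2 hxz.le) (Set.right_mem_Icc.2 hxz.le) hxz)
  · have hanti : StrictAntiOn f (Set.Icc z y) := by
      refine strictAntiOn_of_deriv_neg (convex_Icc z y) (hcont.mono (hs.out hz hy)) ?_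
      intro q hq
      rw [interior_Icc] at hq
      have hqs : q ∈ s := hs.out hz hy (Set.Ioo_subset_Icc_self hq)
      rw [(hf q hqs).deriv]
      exact div_neg_of_neg_of_pos ((hψ hz hqs hq.1).trans hψz) (hw q hqs)
    exact (min_le_right _ _).trans_lt
      (hanti (Set.left_mem_Icc.2 hzy.le) (Set.right_mem_Icc.2 hzy.le) hzy)

noncomputable def reducedPayoff (W pa a c q : ℝ) : ℝ :=
  W * Real.log (1 + a * q) / (q + pa) - c * q

noncomputable def reducedPayoffDerivNum (W pa a c q : ℝ) : ℝ :=
  W * a * (q + pa) / (1 + a * q) - W * Real.log (1 + a * q) - c * (q + pa) ^ 2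

section ReducedPayoff

variable (W pa a c : ℝ)

theorem hasDerivAt_one_add_mul (q : ℝ) : HasDerivAt (fun q : ℝ => 1 + a * q) a q := by
  simpa using ((hasDerivAt_id q).const_mul a).const_add 1

theorem hasDerivAt_reducedPayoff {q : ℝ} (h1 : 0 < 1 + a * q) (h2 : 0 < q + pa) :
    HasDerivAt (reducedPayoff W pa a c) (reducedPayoffDerivNum W pa a c q / (q + pa) ^ 2) q := by
  have hlog := ((hasDerivAt_one_add_mul a q).log h1.ne').const_mul W
  have hden : HasDerivAt (fun q : ℝ => q + pa) 1 q := (hasDerivAt_id q).add_const pa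
  refine ((hlog.div hden h2.ne').sub ((hasDerivAt_id q).const_mul c)).congr_deriv ?_
  unfold reducedPayoffDerivNum
  field_simp

theorem hasDerivAt_reducedPayoffDerivNum {q : ℝ} (h1 : 0 < 1 + a * q) :
    HasDerivAt (reducedPayoffDerivNum W pa a c)
      (-(W * a ^ 2 * (q + pa)) / (1 + a * q) ^ 2 - 2 * c * (q + pa)) q := by
  have hlin := hasDerivAt_one_add_mul a q
  have hden : HasDerivAt (fun q : ℝ => q + pa) 1 q := (hasDerivAt_id q).add_const pa
  refine ((((hden.const_mul (W * a)).div hlin h1.ne').sub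
    ((hlin.log h1.ne').const_mul W)).sub ((hden.pow 2).const_mul c)).congr_deriv ?_
  field_simp
  ring

variable {W pa a c}

theorem strictAntiOn_reducedPayoffDerivNum (hW : 0 < W) (hpa : 0 < pa) (ha : 0 < a)
    (hc : 0 ≤ c) : StrictAntiOn (reducedPayoffDerivNum W pa a c) (Set.Ici 0) := by
  refine strictAntiOn_of_deriv_neg (convex_Ici 0) (fun q hq => ?_) (fun q hq => ?_)
  · exact (hasDerivAt_reducedPayoffDerivNum W pa a c
      (by nlinarith [Set.mem_Ici.1 hq])).continuousAt.continuousWithinAt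
  · rw [interior_Ici] at hq
    have h1 : 0 < 1 + a * q := by nlinarith [Set.mem_Ioi.1 hq]
    have h2 : 0 < q + pa := by linarith [Set.mem_Ioi.1 hq]
    rw [(hasDerivAt_reducedPayoffDerivNum W pa a c h1).deriv, neg_div]
    have : 0 < W * a ^ 2 * (q + pa) / (1 + a * q) ^ 2 := by positivity
    nlinarith

theorem reducedPayoff_min_lt (hW : 0 < W) (hpa : 0 < pa) (ha : 0 < a) (hc : 0 ≤ c)
    {x y : ℝ} (hx : 0 ≤ x) (hy : 0 ≤ y) (hxy : x ≠ y) {t : ℝ}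
    (ht : t ∈ Set.Ioo (0 : ℝ) 1) :
    min (reducedPayoff W pa a c x) (reducedPayoff W pa a c y) <
      reducedPayoff W pa a c (t * x + (1 - t) * y) := by
  have hderiv : ∀ q ∈ Set.Ici (0 : ℝ), HasDerivAt (reducedPayoff W pa a c)
      (reducedPayoffDerivNum W pa a c q / (q + pa) ^ 2) q := fun q hq =>
    hasDerivAt_reducedPayoff W pa a c (by nlinarith [Set.mem_Ici.1 hq])
      (by linarith [Set.mem_Ici.1 hq])
  have hw : ∀ q ∈ Set.Ici (0 : ℝ), 0 < (q + pa) ^ 2 := fun q hq => by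
    have : 0 < q + pa := by linarith [Set.mem_Ici.1 hq]
    positivity
  have hψ := strictAntiOn_reducedPayoffDerivNum hW hpa ha hc
  have hseg : t * x + (1 - t) * y ∈ Set.Ioo (min x y) (max x y) := by
    rw [← openSegment_eq_Ioo' hxy]
    exact ⟨t, 1 - t, ht.1, by linarith [ht.2], by ring, by simp⟩
  rcases hxy.lt_or_gt with hlt | hgt
  · rw [min_eq_left hlt.le, max_eq_right hlt.le] at hseg
    exact min_lt_of_hasDerivAt_div_of_strictAntiOn Set.ordConnected_Ici hderiv hw hψ hx hy
      hseg.1 hseg.2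
  · rw [min_eq_right hgt.le, max_eq_left hgt.le] at hseg
    rw [min_comm]
    exact min_lt_of_hasDerivAt_div_of_strictAntiOn Set.ordConnected_Ici hderiv hw hψ hy hx
      hseg.1 hseg.2

end ReducedPayoff

theorem payoff_update_eq_reducedPayoff {K : ℕ} (W pa p0 : ℝ) (hff : Fin K → Fin K → ℝ)
    (h0f hf0 N lam : Fin K → ℝ) (k : Fin K) (p : Fin K → ℝ) (q : ℝ) :
    payoff W pa p0 hff h0f hf0 N lam k (Function.update p k q) =
      reducedPayoff W pa (hff k k / (N k + h0f k * p0 + ∑ j ∈ univ.erase k, hff j k * p j))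
        (lam k * hf0 k) q := by
  have hsum : ∑ j ∈ univ.erase k, hff j k * Function.update p k q j =
      ∑ j ∈ univ.erase k, hff j k * p j :=
    sum_congr rfl fun j hj => by rw [Function.update_of_ne (mem_erase.1 hj).1]
  simp only [payoff, sinr, reducedPayoff, Function.update_self, hsum]
  ring_nf

theorem payoff_strictQuasiconcave_general {K : ℕ}
    (W pa p0 : ℝ) (hW : 0 < W) (hpa : 0 < pa) (hp0 : 0 ≤ p0)
    (hff : Fin K → Fin K → ℝ) (h0f hf0 N lam pmax : Fin K → ℝ)
    (hhff : ∀ i j, 0 < hff i j) (hh0f : ∀ i, 0 < h0f i) (hhf0 : ∀ i, 0 < hf0 i)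
    (hN : ∀ i, 0 < N i) (hlam : ∀ i, 0 ≤ lam i)
    (k : Fin K) (p : Fin K → ℝ) (hp : ∀ i, i ≠ k → 0 ≤ p i)
    (x y : ℝ) (hx : x ∈ Set.Icc (0:ℝ) (pmax k)) (hy : y ∈ Set.Icc (0:ℝ) (pmax k))
    (hxy : x ≠ y) (t : ℝ) (ht : t ∈ Set.Ioo (0:ℝ) 1) :
    min (payoff W pa p0 hff h0f hf0 N lam k (Function.update p k x))
        (payoff W pa p0 hff h0f hf0 N lam k (Function.update p k y)) <
      payoff W pa p0 hff h0f hf0 N lam k (Function.update p k (t * x + (1 - t) * y)) := by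
  have hinterference : 0 ≤ ∑ j ∈ univ.erase k, hff j k * p j :=
    sum_nonneg fun j hj => mul_nonneg (hhff j k).le (hp j (mem_erase.1 hj).1)
  have hb : 0 < N k + h0f k * p0 + ∑ j ∈ univ.erase k, hff j k * p j := by
    have := mul_nonneg (hh0f k).le hp0
    linarith [hN k]
  simp only [payoff_update_eq_reducedPayoff]
  exact reducedPayoff_min_lt hW hpa (div_pos (hhff k k) hb) (mul_nonneg (hlam k) (hhf0 k).le)
    hx.1 hy.1 hxy ht

/-- Lemma 1 (part): `p_k ↦ u_k(p_k, p_{-k})` is strictly quasiconcave on `[0, p_k^max]`. -/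
theorem payoff_strictQuasiconcave {K : ℕ} (hK : 1 ≤ K)
    (W pa p0 : ℝ) (hW : 0 < W) (hpa : 0 < pa) (hp0 : 0 ≤ p0)
    (hff : Fin K → Fin K → ℝ) (h0f hf0 N lam pmax : Fin K → ℝ)
    (hhff : ∀ i j, 0 < hff i j) (hh0f : ∀ i, 0 < h0f i) (hhf0 : ∀ i, 0 < hf0 i)
    (hN : ∀ i, 0 < N i) (hlam : ∀ i, 0 ≤ lam i) (hpmax : ∀ i, 0 < pmax i)
    (k : Fin K) (p : Fin K → ℝ) (hp : ∀ i, i ≠ k → 0 ≤ p i)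
    (x y : ℝ) (hx : x ∈ Set.Icc (0:ℝ) (pmax k)) (hy : y ∈ Set.Icc (0:ℝ) (pmax k))
    (hxy : x ≠ y) (t : ℝ) (ht : t ∈ Set.Ioo (0:ℝ) 1) :
    min (payoff W pa p0 hff h0f hf0 N lam k (Function.update p k x))
        (payoff W pa p0 hff h0f hf0 N lam k (Function.update p k y)) <
      payoff W pa p0 hff h0f hf0 N lam k (Function.update p k (t * x + (1 - t) * y)) :=
  payoff_strictQuasiconcave_general W pa p0 hW hpa hp0 hff h0f hf0 N lam pmax hhff hh0f hhf0 hN hlam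
    k p hp x y hx hy hxy t ht
end

section
/- For every FU k and every fixed opponent power vector p_{-k} with nonnegative entries, the set of maximizers of p_k ↦ u_k(p_k, p_{-k}) over the compact interval [0, p_k^max] is a singleton; that is, the best response p̂_k(p_{-k}) exists and is unique (single-valued). (Part of Lemma 1.) -/
/-!
Along its own coordinate the payoff of FU `k` is `x ↦ W log (1 + c x) / (x + pa) - L x` with
`c > 0` (own gain over noise plus interference) and `L = λ_k h_{k,0} ≥ 0`. Its derivative is
`ψ(x) / (x + pa)²` with `ψ'(x) = -W c² (x + pa) / (1 + c x)² - 2 L (x + pa) < 0`, so the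
derivative changes sign at most once, from positive to negative. A maximizer exists by
compactness, and two maximizers `x < y` are impossible: the mean value theorem on the two halves
of `[x, y]` would give a nonpositive slope followed by a nonnegative one.
-/

open Real Finset

open Set

section Calculus

variable {f f' : ℝ → ℝ}

theorem lt_midpoint_of_hasDerivAt {x y : ℝ} (hxy : x < y)
    (hf : ∀ t ∈ Icc x y, HasDerivAt f (f' t) t)
    (hf' : ∀ s ∈ Icc x y, ∀ t ∈ Icc x y, s < t → 0 ≤ f' t → 0 < f' s) :
    f x < f ((x + y) / 2) ∨ f y < f ((x + y) / 2) := by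
  have hxm : x < (x + y) / 2 := by linarith
  have hmy : (x + y) / 2 < y := by linarith
  have hcont : ContinuousOn f (Icc x y) := fun t ht => (hf t ht).continuousAt.continuousWithinAt
  by_contra! h
  obtain ⟨s, hs, hfs⟩ := exists_hasDerivAt_eq_slope f f' hxm
    (hcont.mono (Icc_subset_Icc_right hmy.le)) fun t ht => hf t ⟨ht.1.le, ht.2.le.trans hmy.le⟩
  obtain ⟨t, ht, hft⟩ := exists_hasDerivAt_eq_slope f f' hmy
    (hcont.mono (Icc_subset_Icc_left hxm.le)) fun t ht => hf t ⟨hxm.le.trans ht.1.le, ht.2.le⟩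
  have hs_nonpos : f' s ≤ 0 := hfs ▸ div_nonpos_of_nonpos_of_nonneg (by linarith) (by linarith)
  have ht_nonneg : 0 ≤ f' t := hft ▸ div_nonneg (by linarith) (by linarith)
  have hs_mem : s ∈ Icc x y := ⟨hs.1.le, hs.2.le.trans hmy.le⟩
  have ht_mem : t ∈ Icc x y := ⟨hxm.le.trans ht.1.le, ht.2.le⟩
  exact (hf' s hs_mem t ht_mem (hs.2.trans ht.1) ht_nonneg).not_ge hs_nonpos

theorem existsUnique_isMaxOn_Icc_of_hasDerivAt {a b : ℝ} (hab : a ≤ b)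
    (hf : ∀ t ∈ Icc a b, HasDerivAt f (f' t) t)
    (hf' : ∀ s ∈ Icc a b, ∀ t ∈ Icc a b, s < t → 0 ≤ f' t → 0 < f' s) :
    ∃! x, x ∈ Icc a b ∧ ∀ y ∈ Icc a b, f y ≤ f x := by
  obtain ⟨x, hx, hmax⟩ := isCompact_Icc.exists_isMaxOn (nonempty_Icc.2 hab)
    fun t ht => (hf t ht).continuousAt.continuousWithinAt
  have not_two_max : ∀ y ∈ Icc a b, ∀ z ∈ Icc a b, y < z →
      (∀ w ∈ Icc a b, f w ≤ f y) → (∀ w ∈ Icc a b, f w ≤ f z) → False := by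
    intro y hy z hz hyz hmax_y hmax_z
    have hm : (y + z) / 2 ∈ Icc a b := ⟨by linarith [hy.1, hz.1], by linarith [hy.2, hz.2]⟩
    have hsub : Icc y z ⊆ Icc a b := Icc_subset_Icc hy.1 hz.2
    rcases lt_midpoint_of_hasDerivAt hyz (fun t ht => hf t (hsub ht))
        (fun s hs t ht => hf' s (hsub hs) t (hsub ht)) with h | h
    · exact (hmax_y _ hm).not_gt h
    · exact (hmax_z _ hm).not_gt h
  refine ⟨x, ⟨hx, hmax⟩, ?_⟩
  rintro y ⟨hy, hmax_y⟩
  rcases lt_trichotomy y x with h | h | h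
  · exact (not_two_max y hy x hx h hmax_y hmax).elim
  · exact h
  · exact (not_two_max x hx y hy h hmax hmax_y).elim

end Calculus

section OwnPayoff

noncomputable def ownPayoff (W pa c L x : ℝ) : ℝ :=
  W * log (1 + c * x) / (x + pa) - L * x

noncomputable def ownPayoffDerivNum (W pa c L x : ℝ) : ℝ :=
  W * (c * (x + pa) / (1 + c * x) - log (1 + c * x)) - L * (x + pa) ^ 2

variable {W pa c L : ℝ}

theorem hasDerivAt_ownPayoff {x : ℝ} (h1 : 1 + c * x ≠ 0) (h2 : x + pa ≠ 0) :
    HasDerivAt (ownPayoff W pa c L) (ownPayoffDerivNum W pa c L x / (x + pa) ^ 2) x := by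
  have hlin : HasDerivAt (fun t => 1 + c * t) c x := by
    simpa using ((hasDerivAt_id' x).const_mul c).const_add 1
  have := (((hlin.log h1).const_mul W).fun_div ((hasDerivAt_id' x).add_const pa) h2).fun_sub
    ((hasDerivAt_id' x).const_mul L)
  refine this.congr_deriv ?_
  unfold ownPayoffDerivNum
  field_simp

theorem hasDerivAt_ownPayoffDerivNum {x : ℝ} (h1 : 1 + c * x ≠ 0) :
    HasDerivAt (ownPayoffDerivNum W pa c L)
      (-(W * c ^ 2 * (x + pa) / (1 + c * x) ^ 2) - 2 * L * (x + pa)) x := by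
  have hlin : HasDerivAt (fun t => 1 + c * t) c x := by
    simpa using ((hasDerivAt_id' x).const_mul c).const_add 1
  have hshift : HasDerivAt (fun t => t + pa) 1 x := (hasDerivAt_id' x).add_const pa
  have := ((((hshift.const_mul c).fun_div hlin h1).fun_sub (hlin.log h1)).const_mul W).fun_sub
    ((hshift.fun_pow 2).const_mul L)
  refine this.congr_deriv ?_
  field_simp
  ring

theorem ownPayoffDerivNum_strictAntiOn (hW : 0 < W) (hpa : 0 < pa) (hc : 0 < c) (hL : 0 ≤ L) :
    StrictAntiOn (ownPayoffDerivNum W pa c L) (Ici 0) := by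
  have h1 : ∀ x ∈ Ici (0 : ℝ), 0 < 1 + c * x := fun x hx => by nlinarith [mem_Ici.1 hx]
  refine strictAntiOn_of_deriv_neg (convex_Ici 0)
    (fun x hx => (hasDerivAt_ownPayoffDerivNum (h1 x hx).ne').continuousAt.continuousWithinAt) ?_
  intro x hx
  rw [interior_Ici] at hx
  have hx0 : x ∈ Ici (0 : ℝ) := mem_Ici.2 (le_of_lt hx)
  rw [(hasDerivAt_ownPayoffDerivNum (h1 x hx0).ne').deriv]
  have hxpa : 0 < x + pa := by linarith [mem_Ioi.1 hx]
  have : 0 < W * c ^ 2 * (x + pa) / (1 + c * x) ^ 2 :=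
    div_pos (by positivity) (pow_pos (h1 x hx0) 2)
  linarith [mul_nonneg hL hxpa.le]

theorem existsUnique_isMaxOn_ownPayoff (hW : 0 < W) (hpa : 0 < pa) (hc : 0 < c) (hL : 0 ≤ L)
    {b : ℝ} (hb : 0 ≤ b) :
    ∃! x, x ∈ Icc 0 b ∧ ∀ y ∈ Icc 0 b, ownPayoff W pa c L y ≤ ownPayoff W pa c L x := by
  refine existsUnique_isMaxOn_Icc_of_hasDerivAt hb
    (fun t ht => hasDerivAt_ownPayoff (by nlinarith [ht.1]) (by linarith [ht.1])) ?_
  intro s hs t ht hst hnonneg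
  have hψt : 0 ≤ ownPayoffDerivNum W pa c L t := by
    simpa using (le_div_iff₀ (pow_pos (by linarith [ht.1]) 2)).1 hnonneg
  have hψs := ownPayoffDerivNum_strictAntiOn hW hpa hc hL hs.1 ht.1 hst
  exact div_pos (hψt.trans_lt hψs) (pow_pos (by linarith [hs.1]) 2)

end OwnPayoff

theorem payoff_update_self {K : ℕ} (W pa p0 : ℝ) (hff : Fin K → Fin K → ℝ)
    (h0f hf0 N lam : Fin K → ℝ) (k : Fin K) (p : Fin K → ℝ) (y : ℝ) :
    payoff W pa p0 hff h0f hf0 N lam k (Function.update p k y) =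
      ownPayoff W pa (hff k k / (N k + h0f k * p0 + ∑ j ∈ Finset.univ.erase k, hff j k * p j))
        (lam k * hf0 k) y := by
  have hsum : ∑ j ∈ Finset.univ.erase k, hff j k * Function.update p k y j =
      ∑ j ∈ Finset.univ.erase k, hff j k * p j :=
    sum_congr rfl fun j hj => by rw [Function.update_of_ne (ne_of_mem_erase hj)]
  simp only [payoff, sinr, ownPayoff, Function.update_self, hsum, div_mul_eq_mul_div]

theorem bestResponse_exists_unique_general {K : ℕ}
    (W pa p0 : ℝ) (hW : 0 < W) (hpa : 0 < pa) (hp0 : 0 ≤ p0)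
    (hff : Fin K → Fin K → ℝ) (h0f hf0 N lam pmax : Fin K → ℝ)
    (hhff : ∀ i j, 0 < hff i j) (hh0f : ∀ i, 0 < h0f i) (hhf0 : ∀ i, 0 < hf0 i)
    (hN : ∀ i, 0 < N i) (hlam : ∀ i, 0 ≤ lam i) (hpmax : ∀ i, 0 < pmax i)
    (k : Fin K) (p : Fin K → ℝ) (hp : ∀ i, i ≠ k → 0 ≤ p i) :
    ∃! x : ℝ, x ∈ Set.Icc (0:ℝ) (pmax k) ∧
      ∀ y ∈ Set.Icc (0:ℝ) (pmax k),
        payoff W pa p0 hff h0f hf0 N lam k (Function.update p k y) ≤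
          payoff W pa p0 hff h0f hf0 N lam k (Function.update p k x) := by
  have hD : 0 < N k + h0f k * p0 + ∑ j ∈ Finset.univ.erase k, hff j k * p j := by
    have hI : 0 ≤ ∑ j ∈ Finset.univ.erase k, hff j k * p j :=
      sum_nonneg fun j hj => mul_nonneg (hhff j k).le (hp j (ne_of_mem_erase hj))
    linarith [hN k, mul_nonneg (hh0f k).le hp0]
  simp only [payoff_update_self]
  exact existsUnique_isMaxOn_ownPayoff hW hpa (div_pos (hhff k k) hD)
    (mul_nonneg (hlam k) (hhf0 k).le) (hpmax k).le

/-- Lemma 1 (part): the best response of FU `k` exists and is unique: the set of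
maximizers of `p_k ↦ u_k(p_k, p_{-k})` over `[0, p_k^max]` is a singleton. -/
theorem bestResponse_exists_unique {K : ℕ} (hK : 1 ≤ K)
    (W pa p0 : ℝ) (hW : 0 < W) (hpa : 0 < pa) (hp0 : 0 ≤ p0)
    (hff : Fin K → Fin K → ℝ) (h0f hf0 N lam pmax : Fin K → ℝ)
    (hhff : ∀ i j, 0 < hff i j) (hh0f : ∀ i, 0 < h0f i) (hhf0 : ∀ i, 0 < hf0 i)
    (hN : ∀ i, 0 < N i) (hlam : ∀ i, 0 ≤ lam i) (hpmax : ∀ i, 0 < pmax i)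
    (k : Fin K) (p : Fin K → ℝ) (hp : ∀ i, i ≠ k → 0 ≤ p i) :
    ∃! x : ℝ, x ∈ Set.Icc (0:ℝ) (pmax k) ∧
      ∀ y ∈ Set.Icc (0:ℝ) (pmax k),
        payoff W pa p0 hff h0f hf0 N lam k (Function.update p k y) ≤
          payoff W pa p0 hff h0f hf0 N lam k (Function.update p k x) :=
  bestResponse_exists_unique_general W pa p0 hW hpa hp0 hff h0f hf0 N lam pmax hhff hh0f hhf0 hN
    hlam hpmax k p hp
end

section
/- Let W > 0, p_a > 0, G > 0, h > 0, λ ≥ 0 and α ∈ ℝ. Then the function f_α(p) = W·log(1 + G·p) − (λ·h·p + α)·(p + p_a) is concave on [0, ∞). Consequently, for every fixed opponent power vector, each superlevel set {p_k ∈ [0, p_k^max] : u_k(p_k, p_{-k}) ≥ α} of the FU payoff is a convex set, i.e., u_k is quasiconcave in its own power. -/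
open Real Finset

lemma aux_concave (W pa G c α : ℝ) (hW : 0 < W) (hG : 0 < G) (hc : 0 ≤ c) :
    ConcaveOn ℝ (Set.Ici (0:ℝ))
      (fun x => W * Real.log (1 + G * x) - (c * x + α) * (x + pa)) := by
  have h1 : ConcaveOn ℝ (Set.Ici (0:ℝ)) (fun x : ℝ => W * Real.log (1 + G * x)) := by
    have hcomp := (strictConcaveOn_log_Ioi.concaveOn.comp_affineMap
      (AffineMap.lineMap (1:ℝ) (1+G)))
    have hsub : Set.Ici (0:ℝ) ⊆ (AffineMap.lineMap (1:ℝ) (1+G)) ⁻¹' Set.Ioi 0 := by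
      intro x hx
      simp only [Set.mem_preimage, AffineMap.lineMap_apply, Set.mem_Ioi, smul_eq_mul,
        vsub_eq_sub, vadd_eq_add, Set.mem_Ici] at *
      nlinarith
    have h2 := (hcomp.subset hsub (convex_Ici 0)).smul hW.le
    have heq : (fun x : ℝ => W * Real.log (1 + G * x))
        = fun x : ℝ => W • (Real.log ∘ ⇑(AffineMap.lineMap (1:ℝ) (1+G))) x := by
      funext x
      simp only [Function.comp_apply, AffineMap.lineMap_apply, smul_eq_mul,
        vsub_eq_sub, vadd_eq_add]
      ring_nf
    rw [heq]; exact h2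
  have h2 : ConvexOn ℝ (Set.Ici (0:ℝ)) (fun x : ℝ => (c * x + α) * (x + pa)) := by
    have hq : ConvexOn ℝ (Set.Ici (0:ℝ)) (fun x : ℝ => c * x ^ 2) :=
      ((Even.convexOn_pow even_two).subset (Set.subset_univ _) (convex_Ici 0)).smul hc
    have hlin : ConvexOn ℝ (Set.Ici (0:ℝ)) (fun x : ℝ => (c * pa + α) * x + α * pa) := by
      refine ⟨convex_Ici 0, fun x _ y _ a b _ _ hab => ?_⟩
      simp only [smul_eq_mul]
      apply le_of_eq
      linear_combination (-(α * pa)) * hab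
    have hsum := hq.add hlin
    have heq : (fun x : ℝ => (c * x + α) * (x + pa))
        = ((fun x : ℝ => c * x ^ 2) + fun x : ℝ => (c * pa + α) * x + α * pa) := by
      funext x; simp only [Pi.add_apply]; ring
    rw [heq]; exact hsum
  have hs := h1.sub h2
  have heq : (fun x : ℝ => W * Real.log (1 + G * x) - (c * x + α) * (x + pa))
      = ((fun x : ℝ => W * Real.log (1 + G * x)) - fun x : ℝ => (c * x + α) * (x + pa)) := by
    funext x; simp [Pi.sub_apply]
  rw [heq]; exact hs

/-- The auxiliary function `f_α(p) = W·log(1 + G·p) − (λ·h·p + α)·(p + p_a)` is concave on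
`[0, ∞)`; consequently every superlevel set of `u_k` in its own power is convex
(quasiconcavity of the FU payoff). -/
theorem f_alpha_concave_and_superlevel_convex {K : ℕ} (hK : 1 ≤ K)
    (W pa p0 : ℝ) (hW : 0 < W) (hpa : 0 < pa) (hp0 : 0 ≤ p0)
    (hff : Fin K → Fin K → ℝ) (h0f hf0 N lam pmax : Fin K → ℝ)
    (hhff : ∀ i j, 0 < hff i j) (hh0f : ∀ i, 0 < h0f i) (hhf0 : ∀ i, 0 < hf0 i)
    (hN : ∀ i, 0 < N i) (hlam : ∀ i, 0 ≤ lam i) (hpmax : ∀ i, 0 < pmax i) :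
    (∀ G h lam' α : ℝ, 0 < G → 0 < h → 0 ≤ lam' →
      ConcaveOn ℝ (Set.Ici (0:ℝ))
        (fun x => W * Real.log (1 + G * x) - (lam' * h * x + α) * (x + pa))) ∧
    (∀ (k : Fin K) (p : Fin K → ℝ), (∀ i, i ≠ k → 0 ≤ p i) → ∀ α : ℝ,
      Convex ℝ {x : ℝ | x ∈ Set.Icc (0:ℝ) (pmax k) ∧
        α ≤ payoff W pa p0 hff h0f hf0 N lam k (Function.update p k x)}) := by
  constructor
  · intro G h lam' α hG hh hl
    exact aux_concave W pa G (lam' * h) α hW hG (by positivity)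
  · intro k p hp α
    set D : ℝ := N k + h0f k * p0 + ∑ j ∈ Finset.univ.erase k, hff j k * p j with hD_def
    have hD : 0 < D := by
      have hsum : 0 ≤ ∑ j ∈ Finset.univ.erase k, hff j k * p j := by
        apply Finset.sum_nonneg
        intro j hj
        exact mul_nonneg (hhff j k).le (hp j (Finset.mem_erase.mp hj).1)
      have := mul_nonneg (hh0f k).le hp0
      have := hN k
      positivity
    set G : ℝ := hff k k / D with hG_def
    have hG : 0 < G := div_pos (hhff k k) hD
    set c : ℝ := lam k * hf0 k with hc_def
    have hc : 0 ≤ c := mul_nonneg (hlam k) (hhf0 k).le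
    have hpay : ∀ x : ℝ, payoff W pa p0 hff h0f hf0 N lam k (Function.update p k x)
        = W * Real.log (1 + G * x) / (x + pa) - c * x := by
      intro x
      have hsinr : sinr hff h0f N p0 k (Function.update p k x) = G * x := by
        unfold sinr
        have hsum : ∑ j ∈ Finset.univ.erase k, hff j k * Function.update p k x j
            = ∑ j ∈ Finset.univ.erase k, hff j k * p j := by
          apply Finset.sum_congr rfl
          intro j hj
          rw [Function.update_of_ne (Finset.mem_erase.mp hj).1]
        rw [hsum, Function.update_self, ← hD_def, hG_def]
        ring
      unfold payoff
      rw [hsinr, Function.update_self]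
    have hset : {x : ℝ | x ∈ Set.Icc (0:ℝ) (pmax k) ∧
          α ≤ payoff W pa p0 hff h0f hf0 N lam k (Function.update p k x)}
        = Set.Icc (0:ℝ) (pmax k) ∩
          {x ∈ Set.Ici (0:ℝ) |
            (0:ℝ) ≤ W * Real.log (1 + G * x) - (c * x + α) * (x + pa)} := by
      ext x
      simp only [Set.mem_setOf_eq, Set.mem_inter_iff, Set.mem_Icc, Set.mem_Ici]
      constructor
      · rintro ⟨⟨hx0, hx1⟩, hxp⟩
        refine ⟨⟨hx0, hx1⟩, hx0, ?_⟩
        rw [hpay x] at hxp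
        have hxpa : 0 < x + pa := by linarith
        have := (le_div_iff₀ hxpa).mp (by linarith : c * x + α ≤ W * Real.log (1 + G * x) / (x + pa))
        nlinarith
      · rintro ⟨⟨hx0, hx1⟩, -, hf⟩
        refine ⟨⟨hx0, hx1⟩, ?_⟩
        rw [hpay x]
        have hxpa : 0 < x + pa := by linarith
        have h2 : (c * x + α) * (x + pa) ≤ W * Real.log (1 + G * x) := by linarith
        have := (le_div_iff₀ hxpa).mpr h2
        linarith
    rw [hset]
    exact (convex_Icc 0 (pmax k)).inter
      ((aux_concave W pa G c α hW hG hc).convex_ge 0)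
end

section
/- Fix an FU k and two opponent power vectors p_{-k} ≤ p'_{-k} (componentwise, with nonnegative entries within the caps). Assume that for every opponent vector q_{-k} with p_{-k} ≤ q_{-k} ≤ p'_{-k}, the best response b = p̂_k(q_{-k}) satisfies h_{k,k}·b² ≥ p_a·(N_k + h_{0,k}·p_0 + h_{k,k}·b + Σ_{j≠k} h_{j,k}·q_j). Then the best response is monotone: p̂_k(p'_{-k}) ≥ p̂_k(p_{-k}). -/
open Real Finset

/-- `x` is a best response of FU `k` to the opponents' powers in `q`. -/
def IsBestResponse {K : ℕ} (W pa p0 : ℝ) (hff : Fin K → Fin K → ℝ)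
    (h0f hf0 N lam pmax : Fin K → ℝ) (k : Fin K) (q : Fin K → ℝ) (x : ℝ) : Prop :=
  x ∈ Set.Icc (0:ℝ) (pmax k) ∧
    ∀ y ∈ Set.Icc (0:ℝ) (pmax k),
      payoff W pa p0 hff h0f hf0 N lam k (Function.update q k y) ≤
        payoff W pa p0 hff h0f hf0 N lam k (Function.update q k x)

/-!
Write `S` for the noise plus interference seen by FU `k`. As a function of its own power `x`,
the payoff is `W · log (1 + h x / S) / (x + p_a) - c x`, with derivative
`W · m(S, x) / (x + p_a)² - c`, where `m(S, x) = h (x + p_a) / (S + h x) - log (1 + h x / S)`.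
If `b' < b`, the first-order conditions at the two best responses give
`W · m(S, b) / (b + p_a)² ≥ c ≥ W · m(S', b') / (b' + p_a)²` with `S ≤ S'`.
Now `m(S, ·)` is strictly decreasing and `m(S, b) ≥ 0` (since `c ≥ 0`), so `m(S, x) / (x + p_a)²`
is strictly larger at `b'` than at `b`; and `∂m/∂S` has the sign of `h x² - p_a S`, which the
hypothesis at `(p', b')` makes nonnegative on `[S, S']`. Together these contradict the
first-order conditions.
-/

open Set

theorem IsMaxOn.hasDerivAt_mul_sub_nonpos {f : ℝ → ℝ} {f' a y : ℝ} {s : Set ℝ}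
    (hmax : IsMaxOn f s a) (hf : HasDerivAt f f' a) (hs : Convex ℝ s) (ha : a ∈ s)
    (hy : y ∈ s) : f' * (y - a) ≤ 0 := by
  simpa [mul_comm] using hmax.localize.hasFDerivWithinAt_nonpos hf.hasFDerivAt.hasFDerivWithinAt
    (sub_mem_posTangentConeAt_of_segment_subset (hs.segment_subset ha hy))

theorem IsMaxOn.hasDerivAt_nonneg_of_Icc {f : ℝ → ℝ} {f' a l r : ℝ}
    (hmax : IsMaxOn f (Icc l r) a) (hf : HasDerivAt f f' a) (hla : l < a) (har : a ≤ r) :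
    0 ≤ f' :=
  nonneg_of_mul_nonpos_left (hmax.hasDerivAt_mul_sub_nonpos hf (convex_Icc l r)
    ⟨hla.le, har⟩ (left_mem_Icc.2 (hla.le.trans har))) (sub_neg.2 hla)

theorem IsMaxOn.hasDerivAt_nonpos_of_Icc {f : ℝ → ℝ} {f' a l r : ℝ}
    (hmax : IsMaxOn f (Icc l r) a) (hf : HasDerivAt f f' a) (hla : l ≤ a) (har : a < r) :
    f' ≤ 0 :=
  nonpos_of_mul_nonpos_left (hmax.hasDerivAt_mul_sub_nonpos hf (convex_Icc l r)
    ⟨hla, har.le⟩ (right_mem_Icc.2 (hla.trans har.le))) (sub_pos.2 har)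

section EnergyEfficiency

variable (h pa : ℝ)

noncomputable def energyEff (T x : ℝ) : ℝ := Real.log (1 + h * x / T) / (x + pa)

noncomputable def energyEffDerivNum (T x : ℝ) : ℝ :=
  h * (x + pa) / (T + h * x) - Real.log (1 + h * x / T)

variable {h pa}

theorem hasDerivAt_energyEff {T x : ℝ} (hpa : 0 < pa) (hh : 0 < h) (hT : 0 < T) (hx : 0 ≤ x) :
    HasDerivAt (energyEff h pa T) (energyEffDerivNum h pa T x / (x + pa) ^ 2) x := by
  have hlog := ((((hasDerivAt_id' x).const_mul h).div_const T).const_add 1).log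
    (by positivity : 1 + h * x / T ≠ 0)
  refine (hlog.div ((hasDerivAt_id' x).add_const pa) (by positivity)).congr_deriv ?_
  rw [energyEffDerivNum]
  field_simp

theorem hasDerivAt_energyEffDerivNum {T x : ℝ} (hh : 0 < h) (hT : 0 < T) (hx : 0 ≤ x) :
    HasDerivAt (energyEffDerivNum h pa T) (-(h ^ 2 * (x + pa)) / (T + h * x) ^ 2) x := by
  have hfrac := (((hasDerivAt_id' x).add_const pa).const_mul h).div
    (((hasDerivAt_id' x).const_mul h).const_add T) (by positivity : T + h * x ≠ 0)
  have hlog := ((((hasDerivAt_id' x).const_mul h).div_const T).const_add 1).log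
    (by positivity : 1 + h * x / T ≠ 0)
  refine (hfrac.sub hlog).congr_deriv ?_
  field_simp
  ring

theorem hasDerivAt_energyEffDerivNum_left {T x : ℝ} (hh : 0 < h) (hT : 0 < T) (hx : 0 ≤ x) :
    HasDerivAt (energyEffDerivNum h pa · x)
      (h * (h * x ^ 2 - pa * T) / (T * (T + h * x) ^ 2)) T := by
  have hfrac := (hasDerivAt_const T (h * (x + pa))).div ((hasDerivAt_id' T).add_const (h * x))
    (by positivity : T + h * x ≠ 0)
  have hlog := (((hasDerivAt_const T (h * x)).div (hasDerivAt_id' T) hT.ne').const_add 1).log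
    (by positivity : 1 + h * x / T ≠ 0)
  simp only [Pi.div_apply] at hlog
  refine (hfrac.sub hlog).congr_deriv ?_
  field_simp
  ring

theorem strictAntiOn_energyEffDerivNum {T : ℝ} (hpa : 0 < pa) (hh : 0 < h) (hT : 0 < T) :
    StrictAntiOn (energyEffDerivNum h pa T) (Ici 0) := by
  refine strictAntiOn_of_hasDerivWithinAt_neg (convex_Ici 0)
    (fun x hx => (hasDerivAt_energyEffDerivNum hh hT hx).continuousAt.continuousWithinAt)
    (fun x hx => (hasDerivAt_energyEffDerivNum hh hT (interior_subset hx)).hasDerivWithinAt)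
    (fun x hx => ?_)
  rw [interior_Ici, Set.mem_Ioi] at hx
  have hnum : 0 < h ^ 2 * (x + pa) := by positivity
  exact div_neg_of_neg_of_pos (neg_neg_of_pos hnum) (by positivity)

theorem monotoneOn_energyEffDerivNum_left {x : ℝ} (hpa : 0 < pa) (hh : 0 < h) (hx : 0 ≤ x) :
    MonotoneOn (energyEffDerivNum h pa · x) (Ioc 0 (h * x ^ 2 / pa)) := by
  refine monotoneOn_of_hasDerivWithinAt_nonneg (convex_Ioc _ _)
    (fun T hT => (hasDerivAt_energyEffDerivNum_left hh hT.1 hx).continuousAt.continuousWithinAt)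
    (fun T hT => (hasDerivAt_energyEffDerivNum_left hh (interior_subset hT).1 hx).hasDerivWithinAt)
    (fun T hT => ?_)
  rw [interior_Ioc] at hT
  obtain ⟨hT0, hTx⟩ := hT
  have hT' : pa * T ≤ h * x ^ 2 := ((lt_div_iff₀' hpa).1 hTx).le
  exact div_nonneg (mul_nonneg hh.le (sub_nonneg.2 hT')) (by positivity)

theorem energyEffDerivNum_div_sq_lt {T x y : ℝ} (hpa : 0 < pa) (hh : 0 < h) (hT : 0 < T)
    (hx : 0 ≤ x) (hxy : x < y) (hy : 0 ≤ energyEffDerivNum h pa T y) :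
    energyEffDerivNum h pa T y / (y + pa) ^ 2 < energyEffDerivNum h pa T x / (x + pa) ^ 2 :=
  calc energyEffDerivNum h pa T y / (y + pa) ^ 2
      ≤ energyEffDerivNum h pa T y / (x + pa) ^ 2 := by gcongr
    _ < energyEffDerivNum h pa T x / (x + pa) ^ 2 := by
      gcongr
      exact strictAntiOn_energyEffDerivNum hpa hh hT hx (hx.trans hxy.le) hxy

theorem le_of_energyEff_firstOrder {W c S S' b b' : ℝ} (hW : 0 < W) (hpa : 0 < pa) (hh : 0 < h)
    (hc : 0 ≤ c) (hS : 0 < S) (hSS' : S ≤ S') (hb' : 0 ≤ b')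
    (hcond : pa * (S' + h * b') ≤ h * b' ^ 2)
    (hfoc : 0 ≤ W * (energyEffDerivNum h pa S b / (b + pa) ^ 2) - c)
    (hfoc' : W * (energyEffDerivNum h pa S' b' / (b' + pa) ^ 2) - c ≤ 0) :
    b ≤ b' := by
  by_contra! hlt
  have hnum : 0 ≤ energyEffDerivNum h pa S b := by
    have hq := nonneg_of_mul_nonneg_right (hc.trans (sub_nonneg.1 hfoc)) hW
    rwa [le_div_iff₀ (pow_pos (by linarith) 2), zero_mul] at hq
  have hS' : S' ≤ h * b' ^ 2 / pa := by
    rw [le_div_iff₀ hpa]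
    linarith [mul_nonneg (mul_nonneg hpa.le hh.le) hb']
  have hpower := energyEffDerivNum_div_sq_lt hpa hh hS hb' hlt hnum
  have hinterference := monotoneOn_energyEffDerivNum_left hpa hh hb'
    ⟨hS, hSS'.trans hS'⟩ ⟨hS.trans_le hSS', hS'⟩ hSS'
  have := mul_lt_mul_of_pos_left
    (hpower.trans_le (div_le_div_of_nonneg_right hinterference (sq_nonneg _))) hW
  linarith

end EnergyEfficiency

section Game

variable {K : ℕ} (hff : Fin K → Fin K → ℝ) (h0f N : Fin K → ℝ) (p0 : ℝ) (k : Fin K)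

noncomputable def noisePlusInterference (q : Fin K → ℝ) : ℝ :=
  N k + h0f k * p0 + ∑ j ∈ univ.erase k, hff j k * q j

variable {hff h0f N p0 k}

theorem noisePlusInterference_pos {q : Fin K → ℝ} (hN : 0 < N k) (hh0f : 0 ≤ h0f k)
    (hp0 : 0 ≤ p0) (hff_nonneg : ∀ j, 0 ≤ hff j k) (hq : ∀ j, j ≠ k → 0 ≤ q j) :
    0 < noisePlusInterference hff h0f N p0 k q := by
  have hsum : 0 ≤ ∑ j ∈ univ.erase k, hff j k * q j :=
    sum_nonneg fun j hj => mul_nonneg (hff_nonneg j) (hq j (ne_of_mem_erase hj))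
  unfold noisePlusInterference
  positivity

theorem noisePlusInterference_mono {q q' : Fin K → ℝ} (hff_nonneg : ∀ j, 0 ≤ hff j k)
    (hle : ∀ j, j ≠ k → q j ≤ q' j) :
    noisePlusInterference hff h0f N p0 k q ≤ noisePlusInterference hff h0f N p0 k q' := by
  unfold noisePlusInterference
  gcongr with j hj
  exacts [hff_nonneg j, hle j (ne_of_mem_erase hj)]

theorem payoff_update {W pa : ℝ} {hf0 lam : Fin K → ℝ} (q : Fin K → ℝ) (x : ℝ) :
    payoff W pa p0 hff h0f hf0 N lam k (Function.update q k x) =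
      W * energyEff (hff k k) pa (noisePlusInterference hff h0f N p0 k q) x -
        lam k * hf0 k * x := by
  have hsum : ∑ j ∈ univ.erase k, hff j k * Function.update q k x j =
      ∑ j ∈ univ.erase k, hff j k * q j :=
    sum_congr rfl fun j hj => by rw [Function.update_of_ne (ne_of_mem_erase hj)]
  simp only [payoff, sinr, energyEff, noisePlusInterference, Function.update_self, hsum,
    mul_div_assoc]

theorem IsBestResponse.isMaxOn {W pa : ℝ} {hf0 lam pmax q : Fin K → ℝ} {x : ℝ}
    (hx : IsBestResponse W pa p0 hff h0f hf0 N lam pmax k q x) :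
    IsMaxOn (fun y => W * energyEff (hff k k) pa (noisePlusInterference hff h0f N p0 k q) y -
      lam k * hf0 k * y) (Icc 0 (pmax k)) x :=
  isMaxOn_iff.2 fun y hy => by simpa only [payoff_update] using hx.2 y hy

end Game

theorem bestResponse_monotone_general {K : ℕ}
    (W pa p0 : ℝ) (hW : 0 < W) (hpa : 0 < pa) (hp0 : 0 ≤ p0)
    (hff : Fin K → Fin K → ℝ) (h0f hf0 N lam pmax : Fin K → ℝ)
    (hhff : ∀ i j, 0 < hff i j) (hh0f : ∀ i, 0 < h0f i) (hhf0 : ∀ i, 0 < hf0 i)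
    (hN : ∀ i, 0 < N i) (hlam : ∀ i, 0 ≤ lam i)
    (k : Fin K) (p p' : Fin K → ℝ)
    (hp : ∀ i, i ≠ k → 0 ≤ p i) (hle : ∀ i, i ≠ k → p i ≤ p' i)
    (hcond : ∀ q : Fin K → ℝ, (∀ i, i ≠ k → p i ≤ q i ∧ q i ≤ p' i) →
      ∀ b : ℝ, IsBestResponse W pa p0 hff h0f hf0 N lam pmax k q b →
        pa * (N k + h0f k * p0 + hff k k * b + ∑ j ∈ Finset.univ.erase k, hff j k * q j) ≤
          hff k k * b ^ 2)
    (b b' : ℝ)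
    (hb : IsBestResponse W pa p0 hff h0f hf0 N lam pmax k p b)
    (hb' : IsBestResponse W pa p0 hff h0f hf0 N lam pmax k p' b') :
    b ≤ b' := by
  obtain ⟨hb0, hbmax⟩ := hb.1
  obtain ⟨hb'0, hb'max⟩ := hb'.1
  rcases hb0.eq_or_lt with rfl | hb_pos
  · exact hb'0
  rcases hb'max.eq_or_lt with rfl | hb'_lt
  · exact hbmax
  set S := noisePlusInterference hff h0f N p0 k p
  set S' := noisePlusInterference hff h0f N p0 k p'
  set c := lam k * hf0 k
  have hS : 0 < S := noisePlusInterference_pos (hN k) (hh0f k).le hp0 (fun j => (hhff j k).le) hp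
  have hSS' : S ≤ S' := noisePlusInterference_mono (fun j => (hhff j k).le) hle
  have hU : ∀ T x, 0 < T → 0 ≤ x →
      HasDerivAt (fun y => W * energyEff (hff k k) pa T y - c * y)
        (W * (energyEffDerivNum (hff k k) pa T x / (x + pa) ^ 2) - c) x := fun T x hT hx =>
    (((hasDerivAt_energyEff hpa (hhff k k) hT hx).const_mul W).sub
      ((hasDerivAt_id' x).const_mul c)).congr_deriv (by rw [mul_one])
  have hfoc := hb.isMaxOn.hasDerivAt_nonneg_of_Icc (hU S b hS hb0) hb_pos hbmax
  have hfoc' :=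
    hb'.isMaxOn.hasDerivAt_nonpos_of_Icc (hU S' b' (hS.trans_le hSS') hb'0) hb'0 hb'_lt
  have hcond' := hcond p' (fun i hi => ⟨hle i hi, le_rfl⟩) b' hb'
  refine le_of_energyEff_firstOrder hW hpa (hhff k k) (mul_nonneg (hlam k) (hhf0 k).le) hS hSS'
    hb'0 ?_ hfoc hfoc'
  simp only [S', noisePlusInterference]
  linarith

/-- Monotonicity of the best response: if on the whole order interval between `p_{-k}` and
`p'_{-k}` every best response `b` satisfies `h_{k,k}·b² ≥ p_a·(N_k + h_{0,k}p_0 + h_{k,k}b +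
Σ_{j≠k} h_{j,k} q_j)`, then `p̂_k(p_{-k}) ≤ p̂_k(p'_{-k})`. -/
theorem bestResponse_monotone {K : ℕ} (hK : 1 ≤ K)
    (W pa p0 : ℝ) (hW : 0 < W) (hpa : 0 < pa) (hp0 : 0 ≤ p0)
    (hff : Fin K → Fin K → ℝ) (h0f hf0 N lam pmax : Fin K → ℝ)
    (hhff : ∀ i j, 0 < hff i j) (hh0f : ∀ i, 0 < h0f i) (hhf0 : ∀ i, 0 < hf0 i)
    (hN : ∀ i, 0 < N i) (hlam : ∀ i, 0 ≤ lam i) (hpmax : ∀ i, 0 < pmax i)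
    (k : Fin K) (p p' : Fin K → ℝ)
    (hp : ∀ i, i ≠ k → 0 ≤ p i) (hle : ∀ i, i ≠ k → p i ≤ p' i)
    (hcap : ∀ i, i ≠ k → p' i ≤ pmax i)
    (hcond : ∀ q : Fin K → ℝ, (∀ i, i ≠ k → p i ≤ q i ∧ q i ≤ p' i) →
      ∀ b : ℝ, IsBestResponse W pa p0 hff h0f hf0 N lam pmax k q b →
        pa * (N k + h0f k * p0 + hff k k * b + ∑ j ∈ Finset.univ.erase k, hff j k * q j) ≤
          hff k k * b ^ 2)
    (b b' : ℝ)
    (hb : IsBestResponse W pa p0 hff h0f hf0 N lam pmax k p b)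
    (hb' : IsBestResponse W pa p0 hff h0f hf0 N lam pmax k p' b') :
    b ≤ b' :=
  bestResponse_monotone_general W pa p0 hW hpa hp0 hff h0f hf0 N lam pmax hhff hh0f hhf0 hN hlam k p
    p' hp hle hcond b b' hb hb'
end

section
/- Let K ≥ 1 and let f : ℝ^K → ℝ^K be a standard function on the nonnegative orthant, i.e.: (positivity) for every p ≥ 0 (componentwise), f(p) has all components strictly positive; (monotonicity) for all 0 ≤ p ≤ p' componentwise, f(p) ≤ f(p') componentwise; (scalability) for every α > 1 and every p ≥ 0, α·f(p) > f(α·p) componentwise. Then f has at most one fixed point in the nonnegative orthant. -/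
lemma standard_aux {K : ℕ} (hK : 1 ≤ K)
    (f : (Fin K → ℝ) → (Fin K → ℝ))
    (hpos : ∀ p : Fin K → ℝ, (∀ i, 0 ≤ p i) → ∀ i, 0 < f p i)
    (hmono : ∀ p p' : Fin K → ℝ, (∀ i, 0 ≤ p i) → (∀ i, p i ≤ p' i) →
      ∀ i, f p i ≤ f p' i)
    (hscale : ∀ α : ℝ, 1 < α → ∀ p : Fin K → ℝ, (∀ i, 0 ≤ p i) →
      ∀ i, f (fun j => α * p j) i < α * f p i)
    (p q : Fin K → ℝ) (hp : ∀ i, 0 ≤ p i) (hq : ∀ i, 0 ≤ q i)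
    (hfp : f p = p) (hfq : f q = q) :
    ∀ i, q i ≤ p i := by
  have hppos : ∀ i, 0 < p i := by
    intro i; rw [← hfp]; exact hpos p hp i
  have hne : (Finset.univ : Finset (Fin K)).Nonempty := by
    have : 0 < K := hK
    exact ⟨⟨0, this⟩, Finset.mem_univ _⟩
  set α := Finset.univ.sup' hne (fun i => q i / p i) with hα
  obtain ⟨i0, _, hi0⟩ := Finset.exists_mem_eq_sup' hne (fun i => q i / p i)
  have hle : ∀ i, q i ≤ α * p i := by
    intro i
    have := Finset.le_sup' (fun i => q i / p i) (Finset.mem_univ i)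
    rw [← hα] at this
    calc q i = (q i / p i) * p i := (div_mul_cancel₀ _ (hppos i).ne').symm
    _ ≤ α * p i := mul_le_mul_of_nonneg_right this (hppos i).le
  by_contra h
  push_neg at h
  obtain ⟨j, hj⟩ := h
  have hα1 : 1 < α := by
    have : 1 < q j / p j := (one_lt_div (hppos j)).2 hj
    calc (1:ℝ) < q j / p j := this
    _ ≤ α := hα ▸ Finset.le_sup' (fun i => q i / p i) (Finset.mem_univ j)
  have heq : q i0 = α * p i0 := by
    rw [hα, hi0, div_mul_cancel₀ _ (hppos i0).ne']
  have h1 : q i0 ≤ f (fun j => α * p j) i0 := by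
    rw [← hfq]; exact hmono q (fun j => α * p j) hq hle i0
  have h2 : f (fun j => α * p j) i0 < α * f p i0 :=
    hscale α hα1 p hp i0
  rw [hfp] at h2
  exact absurd (h1.trans_lt h2) (by rw [← heq]; exact lt_irrefl _)

/-- Yates' standard-interference-function uniqueness result: a standard function
(positive, monotone, scalable on the nonnegative orthant) has at most one fixed point
in the nonnegative orthant. -/
theorem standard_function_fixedPoint_unique {K : ℕ} (hK : 1 ≤ K)
    (f : (Fin K → ℝ) → (Fin K → ℝ))
    (hpos : ∀ p : Fin K → ℝ, (∀ i, 0 ≤ p i) → ∀ i, 0 < f p i)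
    (hmono : ∀ p p' : Fin K → ℝ, (∀ i, 0 ≤ p i) → (∀ i, p i ≤ p' i) →
      ∀ i, f p i ≤ f p' i)
    (hscale : ∀ α : ℝ, 1 < α → ∀ p : Fin K → ℝ, (∀ i, 0 ≤ p i) →
      ∀ i, f (fun j => α * p j) i < α * f p i)
    (p q : Fin K → ℝ) (hp : ∀ i, 0 ≤ p i) (hq : ∀ i, 0 ≤ q i)
    (hfp : f p = p) (hfq : f q = q) :
    p = q := by
  funext i
  exact le_antisymm
    (standard_aux hK f hpos hmono hscale q p hq hp hfq hfp i)
    (standard_aux hK f hpos hmono hscale p q hp hq hfp hfq i)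
end

section
/- Let K ≥ 1 and let f : ℝ^K → ℝ^K be a standard function on the nonnegative orthant (positivity: f(p) > 0 componentwise for all p ≥ 0; monotonicity: 0 ≤ p ≤ p' implies f(p) ≤ f(p'); scalability: α > 1 and p ≥ 0 imply α·f(p) > f(α·p) componentwise). Suppose f has a fixed point p* ≥ 0. Then for every initial vector p⁰ ≥ 0, the iterates defined by p^{t+1} = f(p^t) converge to p* as t → ∞. (This underlies Proposition 1(iii): when the equilibrium is unique, myopic best-response updating converges to it from any initial strategy.) -/
/-!
Monotonicity and scalability give `α⁻¹ f(p) ≤ f(q) ≤ α f(p)` whenever `α⁻¹ p ≤ q ≤ α p`, so a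
standard function is continuous on the open orthant, and evaluating at the coordinate maximising
`q i / p i` shows it has at most one fixed point. Pick `α > 1` with `α⁻¹ p* ≤ f(p⁰) ≤ α p*`: the
iterates of `α⁻¹ p*` increase and those of `α p*` decrease, both to a fixed point, hence to `p*`,
and by monotonicity they squeeze the iterates of `f(p⁰)`.
-/

open Filter Function Set Topology

def Scalable {ι : Type*} (f : (ι → ℝ) → ι → ℝ) : Prop :=
  ∀ α : ℝ, 1 < α → ∀ p, 0 ≤ p → ∀ i, f (α • p) i < α * f p i

theorem MonotoneOn.iterate {α : Type*} [Preorder α] {f : α → α} {s : Set α}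
    (hf : MonotoneOn f s) (hs : MapsTo f s s) (n : ℕ) : MonotoneOn f^[n] s := by
  induction n with
  | zero => exact monotoneOn_id
  | succ n ih =>
    rw [iterate_succ']
    exact hf.comp ih (hs.iterate n)

section Orthant

variable {ι : Type*} [Finite ι]

theorem eventually_mem_Icc_smul_nhds {p : ι → ℝ} (hp : ∀ i, 0 < p i) {α : ℝ} (hα : 1 < α) :
    ∀ᶠ q in 𝓝 p, q ∈ Icc (α⁻¹ • p) (α • p) :=
  pi_Icc_mem_nhds
    (fun i => (inv_mul_lt_iff₀ (one_pos.trans hα)).2 (lt_mul_of_one_lt_left (hp i) hα))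
    (fun i => lt_mul_of_one_lt_left (hp i) hα)

theorem exists_mem_Icc_smul {x y : ι → ℝ} (hx : ∀ i, 0 < x i) (hy : ∀ i, 0 < y i) :
    ∃ α : ℝ, 1 < α ∧ x ∈ Icc (α⁻¹ • y) (α • y) := by
  have h : ∀ i, ∀ᶠ α : ℝ in atTop, α⁻¹ * y i ≤ x i ∧ x i ≤ α * y i := fun i =>
    ((tendsto_inv_atTop_zero.mul_const (y i)).eventually (ge_mem_nhds (by simpa using hx i))).and
      ((tendsto_id.atTop_mul_const (hy i)).eventually_ge_atTop (x i))
  obtain ⟨α, hα, hxy⟩ := ((eventually_gt_atTop 1).and (eventually_all.2 h)).exists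
  exact ⟨α, hα, fun i => (hxy i).1, fun i => (hxy i).2⟩

end Orthant

namespace Scalable

variable {ι : Type*} {f : (ι → ℝ) → ι → ℝ}

theorem apply_pos (hscale : Scalable f) (hmono : MonotoneOn f (Ici 0)) {p : ι → ℝ} (hp : 0 ≤ p)
    (i : ι) : 0 < f p i := by
  have hp2 : p ≤ (2 : ℝ) • p := le_smul_of_one_le_left hp one_le_two
  have := hmono hp (hp.trans hp2) hp2 i
  linarith [hscale 2 one_lt_two p hp i]

theorem mapsTo_Ici (hscale : Scalable f) (hmono : MonotoneOn f (Ici 0)) :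
    MapsTo f (Ici 0) (Ici 0) :=
  fun _ hp i => (hscale.apply_pos hmono hp i).le

theorem pos_of_isFixedPt (hscale : Scalable f) (hmono : MonotoneOn f (Ici 0)) {p : ι → ℝ}
    (hp : 0 ≤ p) (hfp : IsFixedPt f p) (i : ι) : 0 < p i :=
  hfp.eq ▸ hscale.apply_pos hmono hp i

theorem apply_smul_le (hscale : Scalable f) {α : ℝ} (hα : 1 < α) {p : ι → ℝ} (hp : 0 ≤ p) :
    f (α • p) ≤ α • f p :=
  fun i => (hscale α hα p hp i).le

theorem inv_smul_le_apply (hscale : Scalable f) {α : ℝ} (hα : 1 < α) {p : ι → ℝ} (hp : 0 ≤ p) :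
    α⁻¹ • f p ≤ f (α⁻¹ • p) := by
  have hα0 : 0 < α := one_pos.trans hα
  intro i
  have h := hscale α hα (α⁻¹ • p) (smul_nonneg (inv_nonneg.2 hα0.le) hp) i
  rw [smul_inv_smul₀ hα0.ne'] at h
  exact (inv_mul_le_iff₀ hα0).2 h.le

theorem apply_mem_Icc_smul (hscale : Scalable f) (hmono : MonotoneOn f (Ici 0)) {α : ℝ}
    (hα : 1 < α) {p q : ι → ℝ} (hp : 0 ≤ p) (hq : q ∈ Icc (α⁻¹ • p) (α • p)) :
    f q ∈ Icc (α⁻¹ • f p) (α • f p) := by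
  have hp' : 0 ≤ α⁻¹ • p := smul_nonneg (inv_nonneg.2 (one_pos.trans hα).le) hp
  exact ⟨(hscale.inv_smul_le_apply hα hp).trans (hmono hp' (hp'.trans hq.1) hq.1),
    (hmono (hp'.trans hq.1) (hp'.trans (hq.1.trans hq.2)) hq.2).trans (hscale.apply_smul_le hα hp)⟩

theorem continuousAt [Finite ι] (hscale : Scalable f) (hmono : MonotoneOn f (Ici 0))
    {p : ι → ℝ} (hp : ∀ i, 0 < p i) : ContinuousAt f p := by
  have hp0 : 0 ≤ p := fun i => (hp i).le
  refine tendsto_pi_nhds.2 fun i => tendsto_order.2 ⟨fun b hb => ?_, fun b hb => ?_⟩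
  · have h : Tendsto (fun α : ℝ => α⁻¹ * f p i) (𝓝[>] 1) (𝓝 (f p i)) := by
      simpa using ((tendsto_inv₀ one_ne_zero).mul_const (f p i)).mono_left nhdsWithin_le_nhds
    obtain ⟨α, hb', hα⟩ := ((h.eventually (lt_mem_nhds hb)).and self_mem_nhdsWithin).exists
    filter_upwards [eventually_mem_Icc_smul_nhds hp hα] with q hq
    exact hb'.trans_le ((hscale.apply_mem_Icc_smul hmono hα hp0 hq).1 i)
  · have h : Tendsto (fun α : ℝ => α * f p i) (𝓝[>] 1) (𝓝 (f p i)) :=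
      ((continuous_mul_const (f p i)).tendsto' 1 _ (one_mul _)).mono_left nhdsWithin_le_nhds
    obtain ⟨α, hb', hα⟩ := ((h.eventually (gt_mem_nhds hb)).and self_mem_nhdsWithin).exists
    filter_upwards [eventually_mem_Icc_smul_nhds hp hα] with q hq
    exact ((hscale.apply_mem_Icc_smul hmono hα hp0 hq).2 i).trans_lt hb'

theorem le_of_le_apply_of_apply_le [Finite ι] (hscale : Scalable f)
    (hmono : MonotoneOn f (Ici 0)) {p q : ι → ℝ} (hq : 0 ≤ q) (hqf : q ≤ f q)
    (hp : ∀ i, 0 < p i) (hpf : f p ≤ p) : q ≤ p := by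
  by_contra h
  obtain ⟨j, hj⟩ : ∃ j, p j < q j := by simpa [Pi.le_def] using h
  have : Nonempty ι := ⟨j⟩
  obtain ⟨i, hi⟩ := Finite.exists_max fun i => q i / p i
  set β := q i / p i
  have hβ : 1 < β := ((one_lt_div (hp j)).2 hj).trans_le (hi j)
  have hqβ : q ≤ β • p := fun k => (div_le_iff₀ (hp k)).1 (hi k)
  refine lt_irrefl (q i) ?_
  calc q i ≤ f q i := hqf i
    _ ≤ f (β • p) i := hmono hq (hq.trans hqβ) hqβ i
    _ < β * f p i := hscale β hβ p (fun k => (hp k).le) i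
    _ ≤ β * p i := mul_le_mul_of_nonneg_left (hpf i) (zero_le_one.trans hβ.le)
    _ = q i := div_mul_cancel₀ _ (hp i).ne'

theorem eq_of_isFixedPt [Finite ι] (hscale : Scalable f) (hmono : MonotoneOn f (Ici 0))
    {p q : ι → ℝ} (hp : 0 ≤ p) (hfp : IsFixedPt f p) (hq : 0 ≤ q)
    (hfq : IsFixedPt f q) : p = q :=
  le_antisymm
    (hscale.le_of_le_apply_of_apply_le hmono hp hfp.eq.ge (hscale.pos_of_isFixedPt hmono hq hfq)
      hfq.eq.le)
    (hscale.le_of_le_apply_of_apply_le hmono hq hfq.eq.ge (hscale.pos_of_isFixedPt hmono hp hfp)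
      hfp.eq.le)

theorem eq_of_tendsto_iterate [Finite ι] (hscale : Scalable f) (hmono : MonotoneOn f (Ici 0))
    {x L p : ι → ℝ} (h : Tendsto (fun n => f^[n] x) atTop (𝓝 L)) (hL : ∀ i, 0 < L i)
    (hp : 0 ≤ p) (hfp : IsFixedPt f p) : L = p :=
  hscale.eq_of_isFixedPt hmono (fun i => (hL i).le)
    (isFixedPt_of_tendsto_iterate h (hscale.continuousAt hmono hL)) hp hfp

theorem tendsto_iterate_of_le_apply [Finite ι] (hscale : Scalable f)
    (hmono : MonotoneOn f (Ici 0)) {x p : ι → ℝ} (hx : ∀ i, 0 < x i) (hxf : x ≤ f x)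
    (hxp : x ≤ p) (hp : 0 ≤ p) (hfp : IsFixedPt f p) :
    Tendsto (fun n => f^[n] x) atTop (𝓝 p) := by
  have hmaps := hscale.mapsTo_Ici hmono
  have hx0 : 0 ≤ x := fun i => (hx i).le
  have hmon : Monotone fun n => f^[n] x := monotone_nat_of_le_succ fun n => by
    rw [iterate_succ_apply]
    exact hmono.iterate hmaps n hx0 (hmaps hx0) hxf
  have hbdd : BddAbove (range fun n => f^[n] x) := ⟨p, forall_mem_range.2 fun n =>
    (hfp.iterate n).eq ▸ hmono.iterate hmaps n hx0 hp hxp⟩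
  have hlim := tendsto_atTop_ciSup hmon hbdd
  rwa [hscale.eq_of_tendsto_iterate hmono hlim
    (fun i => (hx i).trans_le (le_ciSup hbdd 0 i)) hp hfp] at hlim

theorem tendsto_iterate_of_apply_le [Finite ι] (hscale : Scalable f)
    (hmono : MonotoneOn f (Ici 0)) {x p : ι → ℝ} (hfx : f x ≤ x) (hpx : p ≤ x) (hp : 0 ≤ p)
    (hfp : IsFixedPt f p) : Tendsto (fun n => f^[n] x) atTop (𝓝 p) := by
  have hmaps := hscale.mapsTo_Ici hmono
  have hx0 : 0 ≤ x := hp.trans hpx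
  have hanti : Antitone fun n => f^[n] x := antitone_nat_of_succ_le fun n => by
    rw [iterate_succ_apply]
    exact hmono.iterate hmaps n (hmaps hx0) hx0 hfx
  have hge (n : ℕ) : p ≤ f^[n] x := (hfp.iterate n).eq ▸ hmono.iterate hmaps n hp hx0 hpx
  have hlim := tendsto_atTop_ciInf hanti ⟨p, forall_mem_range.2 hge⟩
  rwa [hscale.eq_of_tendsto_iterate hmono hlim
    (fun i => (hscale.pos_of_isFixedPt hmono hp hfp i).trans_le (le_ciInf hge i)) hp hfp] at hlim

theorem tendsto_iterate_of_mem_Icc_smul [Finite ι] (hscale : Scalable f)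
    (hmono : MonotoneOn f (Ici 0)) {α : ℝ} (hα : 1 < α) {x p : ι → ℝ}
    (hx : x ∈ Icc (α⁻¹ • p) (α • p)) (hp : 0 ≤ p) (hfp : IsFixedPt f p) :
    Tendsto (fun n => f^[n] x) atTop (𝓝 p) := by
  have hmaps := hscale.mapsTo_Ici hmono
  have hα0 : 0 < α := one_pos.trans hα
  have hlow0 : 0 ≤ α⁻¹ • p := smul_nonneg (inv_nonneg.2 hα0.le) hp
  have hlower : Tendsto (fun n => f^[n] (α⁻¹ • p)) atTop (𝓝 p) :=
    hscale.tendsto_iterate_of_le_apply hmono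
      (fun i => mul_pos (inv_pos.2 hα0) (hscale.pos_of_isFixedPt hmono hp hfp i))
      (by simpa only [hfp.eq] using hscale.inv_smul_le_apply hα hp)
      (smul_le_of_le_one_left hp (inv_le_one_of_one_le₀ hα.le)) hp hfp
  have hupper : Tendsto (fun n => f^[n] (α • p)) atTop (𝓝 p) :=
    hscale.tendsto_iterate_of_apply_le hmono
      (by simpa only [hfp.eq] using hscale.apply_smul_le hα hp)
      (le_smul_of_one_le_left hp hα.le) hp hfp
  refine tendsto_pi_nhds.2 fun i => tendsto_of_tendsto_of_tendsto_of_le_of_le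
    (tendsto_pi_nhds.1 hlower i) (tendsto_pi_nhds.1 hupper i) (fun n => ?_) (fun n => ?_)
  · exact hmono.iterate hmaps n hlow0 (hlow0.trans hx.1) hx.1 i
  · exact hmono.iterate hmaps n (hlow0.trans hx.1) (hlow0.trans (hx.1.trans hx.2)) hx.2 i

end Scalable

theorem standard_function_iterates_tendsto_general {K : ℕ}
    (f : (Fin K → ℝ) → (Fin K → ℝ))
    (hmono : ∀ p p' : Fin K → ℝ, (∀ i, 0 ≤ p i) → (∀ i, p i ≤ p' i) →
      ∀ i, f p i ≤ f p' i)
    (hscale : ∀ α : ℝ, 1 < α → ∀ p : Fin K → ℝ, (∀ i, 0 ≤ p i) →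
      ∀ i, f (fun j => α * p j) i < α * f p i)
    (pstar : Fin K → ℝ) (hpstar : ∀ i, 0 ≤ pstar i) (hfix : f pstar = pstar)
    (p0 : Fin K → ℝ) (hp0 : ∀ i, 0 ≤ p0 i) :
    Filter.Tendsto (fun t => f^[t] p0) Filter.atTop (nhds pstar) := by
  have hmono' : MonotoneOn f (Ici 0) := fun p hp p' _ hpp' => hmono p p' hp hpp'
  have hscale' : Scalable f := hscale
  obtain ⟨α, hα, hf0⟩ := exists_mem_Icc_smul (hscale'.apply_pos hmono' hp0)
    (hscale'.pos_of_isFixedPt hmono' hpstar hfix)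
  refine (tendsto_add_atTop_iff_nat 1).1 ?_
  simpa only [iterate_succ_apply] using
    hscale'.tendsto_iterate_of_mem_Icc_smul hmono' hα hf0 hpstar hfix

/-- Yates' convergence result: if a standard function (positive, monotone, scalable on the
nonnegative orthant) has a fixed point `p*`, then the iterates `p^{t+1} = f(p^t)` converge
to `p*` from every nonnegative initial vector. -/
theorem standard_function_iterates_tendsto {K : ℕ} (hK : 1 ≤ K)
    (f : (Fin K → ℝ) → (Fin K → ℝ))
    (hpos : ∀ p : Fin K → ℝ, (∀ i, 0 ≤ p i) → ∀ i, 0 < f p i)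
    (hmono : ∀ p p' : Fin K → ℝ, (∀ i, 0 ≤ p i) → (∀ i, p i ≤ p' i) →
      ∀ i, f p i ≤ f p' i)
    (hscale : ∀ α : ℝ, 1 < α → ∀ p : Fin K → ℝ, (∀ i, 0 ≤ p i) →
      ∀ i, f (fun j => α * p j) i < α * f p i)
    (pstar : Fin K → ℝ) (hpstar : ∀ i, 0 ≤ pstar i) (hfix : f pstar = pstar)
    (p0 : Fin K → ℝ) (hp0 : ∀ i, 0 ≤ p0 i) :
    Filter.Tendsto (fun t => f^[t] p0) Filter.atTop (nhds pstar) :=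
  standard_function_iterates_tendsto_general f hmono hscale pstar hpstar hfix p0 hp0
end

section
/- Consider a K-player game in which player k's strategy set is a compact interval [a_k, b_k] ⊂ ℝ and player k's payoff u_k : ∏_j [a_j, b_j] → ℝ is continuous and has increasing differences in (s_k, s_j) for every j ≠ k (i.e., for s_k ≤ s_k', s_j ≤ s_j' and any fixed values of the remaining coordinates, u_k(s_k', s_j', ·) − u_k(s_k, s_j', ·) ≥ u_k(s_k', s_j, ·) − u_k(s_k, s_j, ·)). Then the set of pure-strategy Nash equilibria is nonempty and possesses a componentwise greatest element and a componentwise least element. (Proposition 1(i) for supermodular games with scalar strategies.) -/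
/-! Increasing differences make the gain `u k (update s k x') - u k (update s k x)` of raising
one's own strategy from `x` to `x'` monotone in the whole profile `s` (change one coordinate at a
time). By the exchange argument on maximizers, the greatest and the least best-response maps are
then monotone self-maps of the box `Icc a b`; continuity makes the best-response sets nonempty and
compact, so these maps are well defined. The box is a complete lattice, so by Tarski the greatest
best response has a greatest fixed point, which dominates every `s ≤ BR s` and in particular every
equilibrium; dually for the least best response. -/

open Set

/-- `s` is a pure-strategy Nash equilibrium of the game with scalar strategy sets
`[a k, b k]` and payoffs `u`. -/
def IsNE {K : ℕ} (a b : Fin K → ℝ) (u : Fin K → (Fin K → ℝ) → ℝ)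
    (s : Fin K → ℝ) : Prop :=
  (∀ k, s k ∈ Set.Icc (a k) (b k)) ∧
    ∀ k : Fin K, ∀ x ∈ Set.Icc (a k) (b k), u k (Function.update s k x) ≤ u k s

open Function

theorem monotoneOn_Icc_of_le_update {ι : Type*} {α : ι → Type*} {β : Type*} [Fintype ι]
    [DecidableEq ι] [∀ i, Preorder (α i)] [Preorder β] {a b : ∀ i, α i} {g : (∀ i, α i) → β}
    (hg : ∀ s ∈ Icc a b, ∀ i y, s i ≤ y → y ≤ b i → g s ≤ g (update s i y)) :
    MonotoneOn g (Icc a b) := by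
  intro s hs t ht hst
  have key : ∀ F : Finset ι, g s ≤ g (F.piecewise t s) := by
    intro F
    induction F using Finset.induction_on with
    | empty => simp
    | insert j F hj ih =>
      rw [Finset.piecewise_insert]
      refine ih.trans (hg _ (Finset.piecewise_mem_Icc_of_mem_of_mem _ ht hs) j (t j) ?_ (ht.2 j))
      rw [Finset.piecewise_eq_of_notMem _ _ _ hj]
      exact hst j
  simpa using key Finset.univ

theorem IsCompact.setOf_isMaxOn {α β : Type*} [TopologicalSpace α] [T2Space α]
    [TopologicalSpace β] [LinearOrder β] [OrderClosedTopology β] {f : α → β} {I : Set α}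
    (hI : IsCompact I) (hf : ContinuousOn f I) : IsCompact {x ∈ I | IsMaxOn f I x} := by
  rcases I.eq_empty_or_nonempty with rfl | hne
  · simp
  obtain ⟨x₀, hx₀, hmax⟩ := hI.exists_isMaxOn hne hf
  have h : {x ∈ I | IsMaxOn f I x} = I ∩ f ⁻¹' Ici (f x₀) := by
    ext x
    exact and_congr_right fun _ => ⟨fun h => h hx₀, fun h _ hy => (hmax hy).trans h⟩
  rw [h]
  exact hI.of_isClosed_subset (hf.preimage_isClosed_of_isClosed hI.isClosed isClosed_Ici)
    inter_subset_left

theorem IsMaxOn.exchange_of_sub_le_sub {α β : Type*} [AddCommGroup β] [PartialOrder β]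
    [IsOrderedAddMonoid β] {f g : α → β} {I : Set α} {x x' : α}
    (hf : IsMaxOn f I x) (hg : IsMaxOn g I x') (hx : x ∈ I) (hx' : x' ∈ I)
    (hd : f x - f x' ≤ g x - g x') : IsMaxOn g I x ∧ IsMaxOn f I x' :=
  ⟨fun _ hy => (hg hy).trans (sub_nonneg.1 ((sub_nonneg.2 (hf hx')).trans hd)),
    fun _ hy => (hf hy).trans (sub_nonpos.1 (hd.trans (sub_nonpos.2 (hg hx))))⟩

theorem ContinuousOn.comp_update {ι : Type*} {X : ι → Type*} {Y : Type*} [DecidableEq ι]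
    [∀ i, TopologicalSpace (X i)] [TopologicalSpace Y] {f : (∀ i, X i) → Y}
    {t : ∀ i, Set (X i)} (hf : ContinuousOn f (univ.pi t)) {s : ∀ i, X i} (hs : s ∈ univ.pi t)
    (k : ι) : ContinuousOn (fun y => f (update s k y)) (t k) :=
  hf.comp (continuous_const.update k continuous_id).continuousOn
    fun _ hy => (update_mem_pi_iff_of_mem hs).2 fun _ => hy

theorem MonotoneOn.exists_gfp_Icc {α : Type*} [ConditionallyCompleteLattice α] {a b : α}
    {f : α → α} (hf : MonotoneOn f (Icc a b)) (hab : a ≤ b)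
    (hmaps : MapsTo f (Icc a b) (Icc a b)) :
    ∃ x ∈ Icc a b, f x = x ∧ ∀ y ∈ Icc a b, y ≤ f y → y ≤ x := by
  have : Fact (a ≤ b) := ⟨hab⟩
  let F : Icc a b →o Icc a b := ⟨fun x => ⟨f x, hmaps x.2⟩, fun x y h => hf x.2 y.2 h⟩
  exact ⟨F.gfp, F.gfp.2, congrArg Subtype.val F.map_gfp,
    fun y hy h => F.le_gfp (a := ⟨y, hy⟩) h⟩

theorem MonotoneOn.exists_lfp_Icc {α : Type*} [ConditionallyCompleteLattice α] {a b : α}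
    {f : α → α} (hf : MonotoneOn f (Icc a b)) (hab : a ≤ b)
    (hmaps : MapsTo f (Icc a b) (Icc a b)) :
    ∃ x ∈ Icc a b, f x = x ∧ ∀ y ∈ Icc a b, f y ≤ y → x ≤ y := by
  have : Fact (a ≤ b) := ⟨hab⟩
  let F : Icc a b →o Icc a b := ⟨fun x => ⟨f x, hmaps x.2⟩, fun x y h => hf x.2 y.2 h⟩
  exact ⟨F.lfp, F.lfp.2, congrArg Subtype.val F.map_lfp,
    fun y hy h => F.lfp_le (a := ⟨y, hy⟩) h⟩

section Game

variable {ι : Type*} [DecidableEq ι] (a b : ι → ℝ) (u : ι → (ι → ℝ) → ℝ)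

def HasIncreasingDifferences : Prop :=
  ∀ k j : ι, j ≠ k → ∀ s : ι → ℝ, (∀ i, s i ∈ Icc (a i) (b i)) →
    ∀ x x' y y' : ℝ, a k ≤ x → x ≤ x' → x' ≤ b k → a j ≤ y → y ≤ y' → y' ≤ b j →
      u k (update (update s k x') j y) - u k (update (update s k x) j y) ≤
        u k (update (update s k x') j y') - u k (update (update s k x) j y')

def bestResponses (s : ι → ℝ) (k : ι) : Set ℝ :=
  {x ∈ Icc (a k) (b k) | IsMaxOn (fun y => u k (update s k y)) (Icc (a k) (b k)) x}

noncomputable def greatestBestResponse (s : ι → ℝ) : ι → ℝ :=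
  fun k => sSup (bestResponses a b u s k)

noncomputable def leastBestResponse (s : ι → ℝ) : ι → ℝ :=
  fun k => sInf (bestResponses a b u s k)

variable {a b u}

theorem isCompact_bestResponses
    (hcont : ∀ k, ContinuousOn (u k) (univ.pi fun j => Icc (a j) (b j)))
    {s : ι → ℝ} (hs : s ∈ Icc a b) (k : ι) : IsCompact (bestResponses a b u s k) :=
  isCompact_Icc.setOf_isMaxOn ((hcont k).comp_update (fun i _ => ⟨hs.1 i, hs.2 i⟩) k)

theorem bestResponses_nonempty (hab : a ≤ b)
    (hcont : ∀ k, ContinuousOn (u k) (univ.pi fun j => Icc (a j) (b j)))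
    {s : ι → ℝ} (hs : s ∈ Icc a b) (k : ι) : (bestResponses a b u s k).Nonempty :=
  isCompact_Icc.exists_isMaxOn (nonempty_Icc.2 (hab k))
    ((hcont k).comp_update (fun i _ => ⟨hs.1 i, hs.2 i⟩) k)

theorem greatestBestResponse_mem (hab : a ≤ b)
    (hcont : ∀ k, ContinuousOn (u k) (univ.pi fun j => Icc (a j) (b j)))
    {s : ι → ℝ} (hs : s ∈ Icc a b) (k : ι) :
    greatestBestResponse a b u s k ∈ bestResponses a b u s k :=
  (isCompact_bestResponses hcont hs k).sSup_mem (bestResponses_nonempty hab hcont hs k)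

theorem leastBestResponse_mem (hab : a ≤ b)
    (hcont : ∀ k, ContinuousOn (u k) (univ.pi fun j => Icc (a j) (b j)))
    {s : ι → ℝ} (hs : s ∈ Icc a b) (k : ι) :
    leastBestResponse a b u s k ∈ bestResponses a b u s k :=
  (isCompact_bestResponses hcont hs k).sInf_mem (bestResponses_nonempty hab hcont hs k)

theorem le_greatestBestResponse {s : ι → ℝ} {k : ι} {x : ℝ}
    (hx : x ∈ bestResponses a b u s k) : x ≤ greatestBestResponse a b u s k :=
  le_csSup (bddAbove_Icc.mono (sep_subset _ _)) hx

theorem leastBestResponse_le {s : ι → ℝ} {k : ι} {x : ℝ}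
    (hx : x ∈ bestResponses a b u s k) : leastBestResponse a b u s k ≤ x :=
  csInf_le (bddBelow_Icc.mono (sep_subset _ _)) hx

theorem greatestBestResponse_mapsTo (hab : a ≤ b)
    (hcont : ∀ k, ContinuousOn (u k) (univ.pi fun j => Icc (a j) (b j))) :
    MapsTo (greatestBestResponse a b u) (Icc a b) (Icc a b) := fun _ hs =>
  ⟨fun k => (greatestBestResponse_mem hab hcont hs k).1.1,
    fun k => (greatestBestResponse_mem hab hcont hs k).1.2⟩

theorem leastBestResponse_mapsTo (hab : a ≤ b)
    (hcont : ∀ k, ContinuousOn (u k) (univ.pi fun j => Icc (a j) (b j))) :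
    MapsTo (leastBestResponse a b u) (Icc a b) (Icc a b) := fun _ hs =>
  ⟨fun k => (leastBestResponse_mem hab hcont hs k).1.1,
    fun k => (leastBestResponse_mem hab hcont hs k).1.2⟩

theorem HasIncreasingDifferences.sub_le_sub [Fintype ι] (hid : HasIncreasingDifferences a b u)
    {s s' : ι → ℝ} (hs : s ∈ Icc a b) (hs' : s' ∈ Icc a b) (hss' : s ≤ s') {k : ι} {x x' : ℝ}
    (hx : a k ≤ x) (hxx' : x ≤ x') (hx' : x' ≤ b k) :
    u k (update s k x') - u k (update s k x) ≤ u k (update s' k x') - u k (update s' k x) := by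
  refine monotoneOn_Icc_of_le_update (g := fun t => u k (update t k x') - u k (update t k x))
    (fun t ht j y hty hyb => ?_) hs hs' hss'
  rcases eq_or_ne j k with rfl | hjk
  · simp only [update_idem, le_refl]
  · have h := hid k j hjk t (fun i => ⟨ht.1 i, ht.2 i⟩) x x' (t j) y hx hxx' hx'
      (ht.1 j) hty hyb
    rwa [update_comm hjk.symm x' y t, update_comm hjk.symm x y t, update_comm hjk.symm x' (t j) t,
      update_comm hjk.symm x (t j) t, update_eq_self] at h

theorem greatestBestResponse_monotoneOn [Fintype ι] (hab : a ≤ b)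
    (hcont : ∀ k, ContinuousOn (u k) (univ.pi fun j => Icc (a j) (b j)))
    (hid : HasIncreasingDifferences a b u) :
    MonotoneOn (greatestBestResponse a b u) (Icc a b) := by
  intro s hs s' hs' hss' k
  have hx := greatestBestResponse_mem hab hcont hs k
  have hx' := greatestBestResponse_mem hab hcont hs' k
  refine (le_total _ _).elim id fun hle => le_greatestBestResponse ⟨hx.1, ?_⟩
  exact (hx.2.exchange_of_sub_le_sub hx'.2 hx.1 hx'.1
    (hid.sub_le_sub hs hs' hss' hx'.1.1 hle hx.1.2)).1

theorem leastBestResponse_monotoneOn [Fintype ι] (hab : a ≤ b)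
    (hcont : ∀ k, ContinuousOn (u k) (univ.pi fun j => Icc (a j) (b j)))
    (hid : HasIncreasingDifferences a b u) :
    MonotoneOn (leastBestResponse a b u) (Icc a b) := by
  intro s hs s' hs' hss' k
  have hx := leastBestResponse_mem hab hcont hs k
  have hx' := leastBestResponse_mem hab hcont hs' k
  refine (le_total _ _).elim id fun hle => leastBestResponse_le ⟨hx'.1, ?_⟩
  exact (hx.2.exchange_of_sub_le_sub hx'.2 hx.1 hx'.1
    (hid.sub_le_sub hs hs' hss' hx'.1.1 hle hx.1.2)).2

end Game

theorem isNE_iff {K : ℕ} {a b : Fin K → ℝ} {u : Fin K → (Fin K → ℝ) → ℝ} {s : Fin K → ℝ} :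
    IsNE a b u s ↔ ∀ k, s k ∈ bestResponses a b u s k := by
  simp only [IsNE, bestResponses, IsMaxOn, IsMaxFilter, Filter.eventually_principal,
    mem_ofPred_eq, update_eq_self, forall_and]

theorem supermodular_NE_least_greatest_general {K : ℕ}
    (a b : Fin K → ℝ) (hab : ∀ k, a k ≤ b k)
    (u : Fin K → (Fin K → ℝ) → ℝ)
    (hcont : ∀ k, ContinuousOn (u k) (Set.univ.pi fun j => Set.Icc (a j) (b j)))
    (hid : ∀ k j : Fin K, j ≠ k → ∀ s : Fin K → ℝ,
      (∀ i, s i ∈ Set.Icc (a i) (b i)) →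
      ∀ x x' y y' : ℝ, a k ≤ x → x ≤ x' → x' ≤ b k → a j ≤ y → y ≤ y' → y' ≤ b j →
        u k (Function.update (Function.update s k x') j y) -
            u k (Function.update (Function.update s k x) j y) ≤
          u k (Function.update (Function.update s k x') j y') -
            u k (Function.update (Function.update s k x) j y')) :
    ∃ slo shi : Fin K → ℝ, IsNE a b u slo ∧ IsNE a b u shi ∧
      ∀ s : Fin K → ℝ, IsNE a b u s → (∀ k, slo k ≤ s k) ∧ (∀ k, s k ≤ shi k) := by
  obtain ⟨shi, hshi, hfix_hi, hmax⟩ :=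
    (greatestBestResponse_monotoneOn hab hcont hid).exists_gfp_Icc hab
      (greatestBestResponse_mapsTo hab hcont)
  obtain ⟨slo, hslo, hfix_lo, hmin⟩ :=
    (leastBestResponse_monotoneOn hab hcont hid).exists_lfp_Icc hab
      (leastBestResponse_mapsTo hab hcont)
  refine ⟨slo, shi, isNE_iff.2 fun k => ?_, isNE_iff.2 fun k => ?_, fun s hs => ?_⟩
  · exact congrFun hfix_lo k ▸ leastBestResponse_mem hab hcont hslo k
  · exact congrFun hfix_hi k ▸ greatestBestResponse_mem hab hcont hshi k
  · have hsbox : s ∈ Icc a b := ⟨fun k => (hs.1 k).1, fun k => (hs.1 k).2⟩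
    exact ⟨hmin s hsbox fun k => leastBestResponse_le (isNE_iff.1 hs k),
      hmax s hsbox fun k => le_greatestBestResponse (isNE_iff.1 hs k)⟩

/-- Proposition 1(i) for supermodular games with scalar strategies: with compact interval
strategy sets, continuous payoffs and increasing differences, the set of pure-strategy
Nash equilibria is nonempty and has componentwise least and greatest elements. -/
theorem supermodular_NE_least_greatest {K : ℕ} (hK : 1 ≤ K)
    (a b : Fin K → ℝ) (hab : ∀ k, a k ≤ b k)
    (u : Fin K → (Fin K → ℝ) → ℝ)
    (hcont : ∀ k, ContinuousOn (u k) (Set.univ.pi fun j => Set.Icc (a j) (b j)))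
    (hid : ∀ k j : Fin K, j ≠ k → ∀ s : Fin K → ℝ,
      (∀ i, s i ∈ Set.Icc (a i) (b i)) →
      ∀ x x' y y' : ℝ, a k ≤ x → x ≤ x' → x' ≤ b k → a j ≤ y → y ≤ y' → y' ≤ b j →
        u k (Function.update (Function.update s k x') j y) -
            u k (Function.update (Function.update s k x) j y) ≤
          u k (Function.update (Function.update s k x') j y') -
            u k (Function.update (Function.update s k x) j y')) :
    ∃ slo shi : Fin K → ℝ, IsNE a b u slo ∧ IsNE a b u shi ∧
      ∀ s : Fin K → ℝ, IsNE a b u s → (∀ k, slo k ≤ s k) ∧ (∀ k, s k ≤ shi k) :=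
  supermodular_NE_least_greatest_general a b hab u hcont hid
end
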